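/- arXiv:1612.02756 — 6 statements merged into one kernel-verified Lean document; each statement's English description precedes it below -/
import Mathlib

section
/- Let Ω ⊆ ℝⁿ be open. Let Ψ⁻ : ∂Ω × [0,1] → cl Ω and Ψ⁺ : ∂Ω × [0,1] → Ωᶜ be injective maps that are bi-Lipschitz onto their images (with respect to the metric d((x₁,t₁),(x₂,t₂)) = ‖x₁ - x₂‖ + |t₁ - t₂| on ∂Ω × [0,1]), with Ψ⁻(x,0) = Ψ⁺(x,0) = x for all x ∈ ∂Ω, Ψ⁻(∂Ω × (0,1]) ⊆ Ω, and Ψ⁺(∂Ω × (0,1]) ⊆ (cl Ω)ᶜ. Define Ψ : ∂Ω × [-1,1] → ℝⁿ by Ψ(x,t) = Ψ⁻(x,-t) for t ∈ [-1,0), Ψ(x,0) = x, and Ψ(x,t) = Ψ⁺(x,t) for t ∈ (0,1]. Then Ψ is injective and there exist constants c, C > 0, depending only on the Lipschitz constants of Ψ⁻, Ψ⁺ and of their inverses, such that for all x₁, x₂ ∈ ∂Ω and t₁, t₂ ∈ [-1,1]: c·(‖x₁ - x₂‖ + |t₁ - t₂|) ≤ ‖Ψ(x₁,t₁) - Ψ(x₂,t₂)‖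 ≤ C·(‖x₁ - x₂‖ + |t₁ - t₂|); in particular Ψ is bi-Lipschitz onto its image. -/
open Set MeasureTheory Metric
open scoped ENNReal NNReal

noncomputable section

/-- Euclidean `n`-space. -/
abbrev Euc (n : ℕ) : Type := EuclideanSpace ℝ (Fin n)

set_option maxHeartbeats 1000000 in
/-- Gluing two one-sided collars `Ψ⁻`, `Ψ⁺` of `∂Ω`, each
bi-Lipschitz onto its image with respect to the sum metric on `∂Ω × [0,1]`,
yields an injective map `Ψ` on `∂Ω × [-1,1]` that is bi-Lipschitz onto its image
with respect to the sum metric. -/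
theorem glued_collar_biLipschitz {n : ℕ} (Ω : Set (Euc n)) (hΩ : IsOpen Ω)
    (Ψm Ψp : Euc n × ℝ → Euc n) (Km km Kp kp : ℝ) (hkm : 0 < km) (hkp : 0 < kp)
    (hΨm_mem : ∀ x ∈ frontier Ω, ∀ t ∈ Icc (0 : ℝ) 1, Ψm (x, t) ∈ closure Ω)
    (hΨp_mem : ∀ x ∈ frontier Ω, ∀ t ∈ Icc (0 : ℝ) 1, Ψp (x, t) ∈ Ωᶜ)
    (hΨm0 : ∀ x ∈ frontier Ω, Ψm (x, 0) = x)
    (hΨp0 : ∀ x ∈ frontier Ω, Ψp (x, 0) = x)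
    (hΨm_in : ∀ x ∈ frontier Ω, ∀ t ∈ Ioc (0 : ℝ) 1, Ψm (x, t) ∈ Ω)
    (hΨp_in : ∀ x ∈ frontier Ω, ∀ t ∈ Ioc (0 : ℝ) 1, Ψp (x, t) ∈ (closure Ω)ᶜ)
    (hΨm_lip : ∀ x₁ ∈ frontier Ω, ∀ x₂ ∈ frontier Ω,
      ∀ t₁ ∈ Icc (0 : ℝ) 1, ∀ t₂ ∈ Icc (0 : ℝ) 1,
        km * (‖x₁ - x₂‖ + |t₁ - t₂|) ≤ ‖Ψm (x₁, t₁) - Ψm (x₂, t₂)‖ ∧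
        ‖Ψm (x₁, t₁) - Ψm (x₂, t₂)‖ ≤ Km * (‖x₁ - x₂‖ + |t₁ - t₂|))
    (hΨp_lip : ∀ x₁ ∈ frontier Ω, ∀ x₂ ∈ frontier Ω,
      ∀ t₁ ∈ Icc (0 : ℝ) 1, ∀ t₂ ∈ Icc (0 : ℝ) 1,
        kp * (‖x₁ - x₂‖ + |t₁ - t₂|) ≤ ‖Ψp (x₁, t₁) - Ψp (x₂, t₂)‖ ∧
        ‖Ψp (x₁, t₁) - Ψp (x₂, t₂)‖ ≤ Kp * (‖x₁ - x₂‖ + |t₁ - t₂|))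
    (Ψ : Euc n × ℝ → Euc n)
    (hΨdef : ∀ x : Euc n, ∀ t : ℝ,
      Ψ (x, t) = if t < 0 then Ψm (x, -t) else if 0 < t then Ψp (x, t) else x) :
    Set.InjOn Ψ (frontier Ω ×ˢ Icc (-1 : ℝ) 1) ∧
    ∃ c C : ℝ, 0 < c ∧ 0 < C ∧
      ∀ x₁ ∈ frontier Ω, ∀ x₂ ∈ frontier Ω,
      ∀ t₁ ∈ Icc (-1 : ℝ) 1, ∀ t₂ ∈ Icc (-1 : ℝ) 1,
        c * (‖x₁ - x₂‖ + |t₁ - t₂|) ≤ ‖Ψ (x₁, t₁) - Ψ (x₂, t₂)‖ ∧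
        ‖Ψ (x₁, t₁) - Ψ (x₂, t₂)‖ ≤ C * (‖x₁ - x₂‖ + |t₁ - t₂|) := by
  -- Constants
  set c : ℝ := min km kp with hc
  set C : ℝ := max (max Km Kp) 1 with hC
  have hc_pos : 0 < c := lt_min hkm hkp
  have hC_pos : 0 < C := lt_of_lt_of_le one_pos (le_max_right _ _)
  have hKmC : Km ≤ C := le_trans (le_max_left _ _) (le_max_left _ _)
  have hKpC : Kp ≤ C := le_trans (le_max_right _ _) (le_max_left _ _)
  have h1C : (1 : ℝ) ≤ C := le_max_right _ _
  -- Ψ agrees with Ψm on t ≤ 0 and Ψp on t ≥ 0 (on the frontier)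
  have hΨeq_m : ∀ x ∈ frontier Ω, ∀ t : ℝ, t ≤ 0 → Ψ (x, t) = Ψm (x, -t) := by
    intro x hx t ht
    rcases lt_or_eq_of_le ht with h | h
    · rw [hΨdef, if_pos h]
    · rw [h, hΨdef, if_neg (lt_irrefl 0), if_neg (lt_irrefl 0), neg_zero, hΨm0 x hx]
  have hΨeq_p : ∀ x ∈ frontier Ω, ∀ t : ℝ, 0 ≤ t → Ψ (x, t) = Ψp (x, t) := by
    intro x hx t ht
    rcases lt_or_eq_of_le ht with h | h
    · rw [hΨdef, if_neg (not_lt.2 ht), if_pos h]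
    · rw [← h, hΨdef, if_neg (lt_irrefl 0), if_neg (lt_irrefl 0), hΨp0 x hx]
  -- the pure negative case
  have mcase : ∀ x₁ ∈ frontier Ω, ∀ x₂ ∈ frontier Ω,
      ∀ t₁ ∈ Icc (-1 : ℝ) 1, ∀ t₂ ∈ Icc (-1 : ℝ) 1, t₁ ≤ 0 → t₂ ≤ 0 →
        c * (‖x₁ - x₂‖ + |t₁ - t₂|) ≤ ‖Ψ (x₁, t₁) - Ψ (x₂, t₂)‖ ∧
        ‖Ψ (x₁, t₁) - Ψ (x₂, t₂)‖ ≤ C * (‖x₁ - x₂‖ + |t₁ - t₂|) := by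
    intro x₁ hx₁ x₂ hx₂ t₁ ht₁ t₂ ht₂ h1 h2
    rw [hΨeq_m x₁ hx₁ t₁ h1, hΨeq_m x₂ hx₂ t₂ h2]
    have h := hΨm_lip x₁ hx₁ x₂ hx₂ (-t₁) ⟨neg_nonneg.2 h1, by linarith [ht₁.1]⟩
      (-t₂) ⟨neg_nonneg.2 h2, by linarith [ht₂.1]⟩
    have habs : |(-t₁) - (-t₂)| = |t₁ - t₂| := by
      rw [show (-t₁) - (-t₂) = -(t₁ - t₂) by ring, abs_neg]
    rw [habs] at h
    have hnn : 0 ≤ ‖x₁ - x₂‖ + |t₁ - t₂| := by positivity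
    constructor
    · have e := mul_le_mul_of_nonneg_right (min_le_left km kp) hnn
      linarith [h.1]
    · have e := mul_le_mul_of_nonneg_right hKmC hnn
      linarith [h.2]
  -- the pure positive case
  have pcase : ∀ x₁ ∈ frontier Ω, ∀ x₂ ∈ frontier Ω,
      ∀ t₁ ∈ Icc (-1 : ℝ) 1, ∀ t₂ ∈ Icc (-1 : ℝ) 1, 0 ≤ t₁ → 0 ≤ t₂ →
        c * (‖x₁ - x₂‖ + |t₁ - t₂|) ≤ ‖Ψ (x₁, t₁) - Ψ (x₂, t₂)‖ ∧
        ‖Ψ (x₁, t₁) - Ψ (x₂, t₂)‖ ≤ C * (‖x₁ - x₂‖ + |t₁ - t₂|) := by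
    intro x₁ hx₁ x₂ hx₂ t₁ ht₁ t₂ ht₂ h1 h2
    rw [hΨeq_p x₁ hx₁ t₁ h1, hΨeq_p x₂ hx₂ t₂ h2]
    have h := hΨp_lip x₁ hx₁ x₂ hx₂ t₁ ⟨h1, ht₁.2⟩ t₂ ⟨h2, ht₂.2⟩
    have hnn : 0 ≤ ‖x₁ - x₂‖ + |t₁ - t₂| := by positivity
    constructor
    · have e := mul_le_mul_of_nonneg_right (min_le_right km kp) hnn
      linarith [h.1]
    · have e := mul_le_mul_of_nonneg_right hKpC hnn
      linarith [h.2]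
  -- the mixed case t₁ < 0 < t₂
  have mixed : ∀ x₁ ∈ frontier Ω, ∀ x₂ ∈ frontier Ω,
      ∀ t₁ ∈ Icc (-1 : ℝ) 1, ∀ t₂ ∈ Icc (-1 : ℝ) 1, t₁ < 0 → 0 < t₂ →
        c * (‖x₁ - x₂‖ + |t₁ - t₂|) ≤ ‖Ψ (x₁, t₁) - Ψ (x₂, t₂)‖ ∧
        ‖Ψ (x₁, t₁) - Ψ (x₂, t₂)‖ ≤ C * (‖x₁ - x₂‖ + |t₁ - t₂|) := by
    intro x₁ hx₁ x₂ hx₂ t₁ ht₁ t₂ ht₂ h1 h2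
    rw [hΨeq_m x₁ hx₁ t₁ h1.le, hΨeq_p x₂ hx₂ t₂ h2.le]
    set p₁ := Ψm (x₁, -t₁) with hp₁
    set p₂ := Ψp (x₂, t₂) with hp₂
    have ht₁m : -t₁ ∈ Icc (0:ℝ) 1 := ⟨by linarith, by linarith [ht₁.1]⟩
    have ht₂m : t₂ ∈ Icc (0:ℝ) 1 := ⟨h2.le, ht₂.2⟩
    have h0m : (0:ℝ) ∈ Icc (0:ℝ) 1 := ⟨le_refl 0, zero_le_one⟩
    have hp₁Ω : p₁ ∈ Ω := hΨm_in x₁ hx₁ (-t₁) ⟨by linarith, by linarith [ht₁.1]⟩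
    have hp₂Ω : p₂ ∈ (closure Ω)ᶜ := hΨp_in x₂ hx₂ t₂ ⟨h2, ht₂.2⟩
    -- the segment from p₁ to p₂ crosses the frontier
    obtain ⟨z, hzseg, hzF⟩ : ∃ z ∈ segment ℝ p₁ p₂, z ∈ frontier Ω := by
      by_contra hcon
      push_neg at hcon
      have hsub : segment ℝ p₁ p₂ ⊆ Ω ∪ (closure Ω)ᶜ := by
        intro y hy
        by_cases hyΩ : y ∈ Ω
        · exact Or.inl hyΩ
        by_cases hyc : y ∈ closure Ω
        · exact absurd ⟨hyc, by rwa [hΩ.interior_eq]⟩ (hcon y hy)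
        · exact Or.inr hyc
      have hdisj : Disjoint Ω (closure Ω)ᶜ :=
        disjoint_compl_right.mono_left subset_closure
      rcases (convex_segment p₁ p₂).isPreconnected.subset_or_subset hΩ
          isClosed_closure.isOpen_compl hdisj hsub with hs | hs
      · exact hp₂Ω (subset_closure (hs (right_mem_segment ℝ p₁ p₂)))
      · exact hs (left_mem_segment ℝ p₁ p₂) (subset_closure hp₁Ω)
    have hdist : ‖p₁ - z‖ + ‖z - p₂‖ = ‖p₁ - p₂‖ := by
      have := dist_add_dist_of_mem_segment hzseg
      simpa [dist_eq_norm] using this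
    have hA := hΨm_lip x₁ hx₁ z hzF (-t₁) ht₁m 0 h0m
    rw [hΨm0 z hzF] at hA
    have hB := hΨp_lip z hzF x₂ hx₂ 0 h0m t₂ ht₂m
    rw [hΨp0 z hzF] at hB
    have habsA : |(-t₁) - 0| = -t₁ := by rw [sub_zero, abs_neg, abs_of_neg h1]
    have habsB : |(0:ℝ) - t₂| = t₂ := by rw [zero_sub, abs_neg, abs_of_pos h2]
    rw [habsA] at hA
    rw [habsB] at hB
    have habs : |t₁ - t₂| = (-t₁) + t₂ := by rw [abs_of_neg (by linarith)]; ring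
    have htri : ‖x₁ - x₂‖ ≤ ‖x₁ - z‖ + ‖z - x₂‖ := by
      have := dist_triangle x₁ z x₂
      simpa [dist_eq_norm] using this
    constructor
    · -- lower bound
      rw [habs]
      have e1 : c * (‖x₁ - z‖ + -t₁) ≤ km * (‖x₁ - z‖ + -t₁) :=
        mul_le_mul_of_nonneg_right (min_le_left km kp) (by linarith [norm_nonneg (x₁ - z)])
      have e2 : c * (‖z - x₂‖ + t₂) ≤ kp * (‖z - x₂‖ + t₂) :=
        mul_le_mul_of_nonneg_right (min_le_right km kp) (by linarith [norm_nonneg (z - x₂)])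
      have e3 : c * (‖x₁ - x₂‖ + (-t₁ + t₂)) ≤
          c * ((‖x₁ - z‖ + -t₁) + (‖z - x₂‖ + t₂)) :=
        mul_le_mul_of_nonneg_left (by linarith) hc_pos.le
      have hA1 : km * (‖x₁ - z‖ + -t₁) ≤ ‖p₁ - z‖ := hA.1
      have hB1 : kp * (‖z - x₂‖ + t₂) ≤ ‖z - p₂‖ := hB.1
      linarith
    · -- upper bound
      have htri4 : ‖p₁ - p₂‖ ≤ ‖p₁ - x₁‖ + ‖x₁ - x₂‖ + ‖x₂ - p₂‖ := by
        have := dist_triangle4 p₁ x₁ x₂ p₂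
        simpa [dist_eq_norm] using this
      have hA2 : ‖p₁ - x₁‖ ≤ Km * (-t₁) := by
        have h := hΨm_lip x₁ hx₁ x₁ hx₁ (-t₁) ht₁m 0 h0m
        rw [hΨm0 x₁ hx₁, habsA] at h
        simpa using h.2
      have hB2 : ‖x₂ - p₂‖ ≤ Kp * t₂ := by
        have h := hΨp_lip x₂ hx₂ x₂ hx₂ 0 h0m t₂ ht₂m
        rw [hΨp0 x₂ hx₂, habsB] at h
        simpa using h.2
      rw [habs]
      have e1 : Km * (-t₁) ≤ C * (-t₁) :=
        mul_le_mul_of_nonneg_right hKmC (by linarith)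
      have e2 : Kp * t₂ ≤ C * t₂ := mul_le_mul_of_nonneg_right hKpC h2.le
      have e3 : ‖x₁ - x₂‖ ≤ C * ‖x₁ - x₂‖ := le_mul_of_one_le_left (norm_nonneg _) h1C
      linarith
  -- full estimate
  have bound : ∀ x₁ ∈ frontier Ω, ∀ x₂ ∈ frontier Ω,
      ∀ t₁ ∈ Icc (-1 : ℝ) 1, ∀ t₂ ∈ Icc (-1 : ℝ) 1,
        c * (‖x₁ - x₂‖ + |t₁ - t₂|) ≤ ‖Ψ (x₁, t₁) - Ψ (x₂, t₂)‖ ∧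
        ‖Ψ (x₁, t₁) - Ψ (x₂, t₂)‖ ≤ C * (‖x₁ - x₂‖ + |t₁ - t₂|) := by
    intro x₁ hx₁ x₂ hx₂ t₁ ht₁ t₂ ht₂
    rcases le_or_gt 0 t₁ with h1 | h1 <;> rcases le_or_gt 0 t₂ with h2 | h2
    · exact pcase x₁ hx₁ x₂ hx₂ t₁ ht₁ t₂ ht₂ h1 h2
    · rcases eq_or_lt_of_le h1 with h1' | h1'
      · exact mcase x₁ hx₁ x₂ hx₂ t₁ ht₁ t₂ ht₂ (le_of_eq h1'.symm) h2.le
      · have h := mixed x₂ hx₂ x₁ hx₁ t₂ ht₂ t₁ ht₁ h2 h1'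
        rw [norm_sub_rev (Ψ (x₂, t₂)), norm_sub_rev x₂, abs_sub_comm t₂] at h
        exact h
    · rcases eq_or_lt_of_le h2 with h2' | h2'
      · exact mcase x₁ hx₁ x₂ hx₂ t₁ ht₁ t₂ ht₂ h1.le (le_of_eq h2'.symm)
      · exact mixed x₁ hx₁ x₂ hx₂ t₁ ht₁ t₂ ht₂ h1 h2'
    · exact mcase x₁ hx₁ x₂ hx₂ t₁ ht₁ t₂ ht₂ h1.le h2.le
  refine ⟨?_, c, C, hc_pos, hC_pos, bound⟩
  rintro ⟨x₁, t₁⟩ ⟨hx₁, ht₁⟩ ⟨x₂, t₂⟩ ⟨hx₂, ht₂⟩ heq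
  have h := (bound x₁ hx₁ x₂ hx₂ t₁ ht₁ t₂ ht₂).1
  rw [heq, sub_self, norm_zero] at h
  have hnn1 : 0 ≤ ‖x₁ - x₂‖ := norm_nonneg _
  have hnn2 : 0 ≤ |t₁ - t₂| := abs_nonneg _
  have hx : ‖x₁ - x₂‖ = 0 := by
    by_contra hne
    have h0 : 0 < ‖x₁ - x₂‖ := lt_of_le_of_ne hnn1 (Ne.symm hne)
    nlinarith [mul_pos hc_pos h0, mul_nonneg hc_pos.le hnn2]
  have ht : |t₁ - t₂| = 0 := by
    by_contra hne
    have h0 : 0 < |t₁ - t₂| := lt_of_le_of_ne hnn2 (Ne.symm hne)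
    nlinarith [mul_pos hc_pos h0, mul_nonneg hc_pos.le hnn1]
  have : x₁ = x₂ := by rwa [norm_sub_eq_zero_iff] at hx
  have : t₁ = t₂ := by rwa [abs_eq_zero, sub_eq_zero] at ht
  simp_all

end
end

section
/- Let U, V ⊆ ℝⁿ be open sets and let Φ : U → V be a bi-Lipschitz bijection. Suppose there exists o ∈ {-1, 1} such that sgn(det DΦ_x) = o for almost every x ∈ U, where DΦ_x denotes the Fréchet derivative of Φ, which exists almost everywhere by Rademacher's theorem. Then for every Lebesgue-integrable function ω : V → ℝ one has ∫_U ω(Φ(x)) · det(DΦ_x) dx = o · ∫_V ω(y) dy. -/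
/-!
Off a null set `Φ` is differentiable, so the change-of-variables formula for injective maps
differentiable on a measurable set applies to `U` minus a measurable null set. Removing it changes
the image `V` only by a null set, because a Lipschitz map sends sets of `n`-dimensional
Hausdorff measure zero to such sets, and that measure is a multiple of Lebesgue measure. Finally
`det DΦ = sign (det DΦ) * |det DΦ| = o * |det DΦ|` almost everywhere.
-/

open Set MeasureTheory Metric
open scoped ENNReal NNReal

noncomputable section

/-- `f` is bi-Lipschitz on `s` (i.e. Lipschitz with a Lipschitz inverse on the image). -/
def BiLipschitzOn {α β : Type*} [PseudoMetricSpace α] [PseudoMetricSpace β]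
    (f : α → β) (s : Set α) : Prop :=
  ∃ C c : ℝ, 0 < c ∧ ∀ x ∈ s, ∀ y ∈ s,
    c * dist x y ≤ dist (f x) (f y) ∧ dist (f x) (f y) ≤ C * dist x y

/-- `f` is locally Lipschitz (LIP) on `s`: every point of `s` has a relative
neighborhood on which `f` is Lipschitz. -/
def LocLipschitzOn {α β : Type*} [PseudoMetricSpace α] [PseudoMetricSpace β]
    (f : α → β) (s : Set α) : Prop :=
  ∀ x ∈ s, ∃ t ∈ nhdsWithin x s, ∃ K : ℝ,
    ∀ a ∈ t ∩ s, ∀ b ∈ t ∩ s, dist (f a) (f b) ≤ K * dist a b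

/-- `f` is a LIP embedding of `s`: injective, locally Lipschitz, with locally
Lipschitz inverse on the image. -/
def IsLIPEmbeddingOn {α β : Type*} [PseudoMetricSpace α] [PseudoMetricSpace β]
    (f : α → β) (s : Set α) : Prop :=
  Set.InjOn f s ∧ LocLipschitzOn f s ∧
    ∃ g : β → α, (∀ x ∈ s, g (f x) = x) ∧ LocLipschitzOn g (f '' s)

theorem Real.sign_mul_abs (r : ℝ) : Real.sign r * |r| = r := by
  rcases lt_trichotomy r 0 with hr | rfl | hr
  · rw [Real.sign_of_neg hr, abs_of_neg hr, neg_one_mul, neg_neg]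
  · simp
  · rw [Real.sign_of_pos hr, abs_of_pos hr, one_mul]

theorem BiLipschitzOn.exists_lipschitzOnWith {α β : Type*} [PseudoMetricSpace α]
    [PseudoMetricSpace β] {f : α → β} {s : Set α} (hf : BiLipschitzOn f s) :
    ∃ K, LipschitzOnWith K f s := by
  obtain ⟨C, _, _, hC⟩ := hf
  refine ⟨C.toNNReal, LipschitzOnWith.of_dist_le_mul fun x hx y hy => ?_⟩
  exact (hC x hx y hy).2.trans (mul_le_mul_of_nonneg_right (Real.le_coe_toNNReal C) dist_nonneg)

section InnerProductSpace

variable {V : Type*} [NormedAddCommGroup V] [InnerProductSpace ℝ V] [FiniteDimensional ℝ V]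
  [MeasurableSpace V] [BorelSpace V]

theorem InnerProductSpace.volume_eq_zero_iff_hausdorffMeasure_eq_zero {s : Set V} :
    volume s = 0 ↔ μH[Module.finrank ℝ V] s = 0 := by
  rw [← InnerProductSpace.euclideanHausdorffMeasure_eq_volume,
    Measure.euclideanHausdorffMeasure_def, Measure.smul_apply, smul_eq_zero]
  simp [Measure.addHaarScalarFactor_volume_hausdorffMeasure_ne_zero]

theorem LipschitzOnWith.volume_image_eq_zero {K : ℝ≥0} {f : V → V} {s : Set V}
    (hf : LipschitzOnWith K f s) (hs : volume s = 0) : volume (f '' s) = 0 := by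
  rw [InnerProductSpace.volume_eq_zero_iff_hausdorffMeasure_eq_zero] at hs ⊢
  refine le_antisymm ?_ zero_le
  simpa [hs] using hf.hausdorffMeasure_image_le (Nat.cast_nonneg (Module.finrank ℝ V))

end InnerProductSpace

section Jacobian

variable {E F : Type*} [NormedAddCommGroup E] [NormedSpace ℝ E] [FiniteDimensional ℝ E]
  [MeasurableSpace E] [BorelSpace E] (μ : Measure E) [μ.IsAddHaarMeasure]
  [NormedAddCommGroup F] [NormedSpace ℝ F] {s : Set E} {f : E → E}

/-- `hN` (Lusin's property (N)) keeps the null set where `f` is not differentiable from changing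
`f '' s` by more than a null set. -/
theorem integral_image_eq_integral_abs_det_fderiv_smul_of_ae_differentiableAt
    (hs : MeasurableSet s) (hf : ∀ᵐ x ∂μ.restrict s, DifferentiableAt ℝ f x) (hinj : InjOn f s)
    (hN : ∀ t ⊆ s, μ t = 0 → μ (f '' t) = 0) (g : E → F) :
    ∫ x in f '' s, g x ∂μ = ∫ x in s, |(fderiv ℝ f x).det| • g (f x) ∂μ := by
  obtain ⟨N, hbad, hNm, hN0⟩ :=
    exists_measurable_superset_of_null (ae_iff.1 ((ae_restrict_iff' hs).1 hf))
  have hdiff : ∀ x ∈ s \ N, HasFDerivWithinAt f (fderiv ℝ f x) (s \ N) x := by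
    intro x ⟨hxs, hxN⟩
    have hx : DifferentiableAt ℝ f x := by_contra fun h => hxN (hbad fun h' => h (h' hxs))
    exact hx.hasFDerivAt.hasFDerivWithinAt
  have himg : f '' (s \ N) =ᵐ[μ] f '' s := by
    have hnull : f '' (s ∩ N) =ᵐ[μ] (∅ : Set E) :=
      ae_eq_empty.2 (hN _ inter_subset_left (measure_mono_null inter_subset_right hN0))
    have h := union_ae_eq_left_of_ae_eq_empty (s := f '' (s \ N)) hnull
    rw [← image_union, sdiff_union_inter] at h
    exact h.symm
  rw [← setIntegral_congr_set himg,
    integral_image_eq_integral_abs_det_fderiv_smul μ (hs.diff hNm) hdiff (hinj.mono sdiff_subset),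
    setIntegral_congr_set (sdiff_null_ae_eq_self hN0)]

end Jacobian

theorem biLipschitz_change_of_variables_general {n : ℕ} (U V : Set (Euc n))
    (hU : IsOpen U) (Φ : Euc n → Euc n)
    (hbij : Set.BijOn Φ U V) (hlip : BiLipschitzOn Φ U)
    (o : ℝ)
    (hsgn : ∀ᵐ x ∂(volume.restrict U), DifferentiableAt ℝ Φ x ∧
      Real.sign (LinearMap.det ((fderiv ℝ Φ x : Euc n →ₗ[ℝ] Euc n))) = o)
    (ω : Euc n → ℝ) :
    ∫ x in U, ω (Φ x) * LinearMap.det ((fderiv ℝ Φ x : Euc n →ₗ[ℝ] Euc n))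
      = o * ∫ y in V, ω y := by
  obtain ⟨K, hK⟩ := hlip.exists_lipschitzOnWith
  have hcov := integral_image_eq_integral_abs_det_fderiv_smul_of_ae_differentiableAt volume
    hU.measurableSet (hsgn.mono fun x hx => hx.1) hbij.injOn
    (fun t ht ht0 => (hK.mono ht).volume_image_eq_zero ht0) ω
  rw [← hbij.image_eq, hcov, ← integral_const_mul]
  refine integral_congr_ae (hsgn.mono fun x ⟨_, hsign⟩ => ?_)
  have hdet := Real.sign_mul_abs (LinearMap.det (fderiv ℝ Φ x : Euc n →ₗ[ℝ] Euc n))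
  rw [hsign] at hdet
  change _ = o * (|LinearMap.det (fderiv ℝ Φ x : Euc n →ₗ[ℝ] Euc n)| * _)
  linear_combination (-ω (Φ x)) * hdet

/-- Change of variables for bi-Lipschitz maps: if `Φ : U → V` is
a bi-Lipschitz bijection between open sets whose Jacobian determinant has
almost everywhere constant sign `o ∈ {±1}`, then
`∫_U ω(Φ(x)) · det DΦ_x dx = o · ∫_V ω(y) dy` for integrable `ω`. -/
theorem biLipschitz_change_of_variables {n : ℕ} (U V : Set (Euc n))
    (hU : IsOpen U) (hV : IsOpen V) (Φ : Euc n → Euc n)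
    (hbij : Set.BijOn Φ U V) (hlip : BiLipschitzOn Φ U)
    (o : ℝ) (ho : o = 1 ∨ o = -1)
    (hsgn : ∀ᵐ x ∂(volume.restrict U), DifferentiableAt ℝ Φ x ∧
      Real.sign (LinearMap.det ((fderiv ℝ Φ x : Euc n →ₗ[ℝ] Euc n))) = o)
    (ω : Euc n → ℝ) (hω : IntegrableOn ω V) :
    ∫ x in U, ω (Φ x) * LinearMap.det ((fderiv ℝ Φ x : Euc n →ₗ[ℝ] Euc n))
      = o * ∫ y in V, ω y :=
  biLipschitz_change_of_variables_general U V hU Φ hbij hlip o hsgn ω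

end
end

section
/- Let Φ : U → V be a bi-Lipschitz bijection between open sets U, V ⊆ ℝⁿ, let k ∈ ℕ, and let p ∈ [1,∞] (with the convention n/∞ = 0). Then for every ω ∈ LᵖΛᵏ(V) the pullback Φ*ω belongs to LᵖΛᵏ(U), and ‖Φ*ω‖_{LᵖΛᵏ(U)} ≤ ‖DΦ‖_{L∞(U)}ᵏ · ‖det D(Φ⁻¹)‖_{L∞(V)}^{1/p} · ‖ω‖_{LᵖΛᵏ(V)} ≤ ‖DΦ‖_{L∞(U)}ᵏ · ‖D(Φ⁻¹)‖_{L∞(V)}^{n/p} · ‖ω‖_{LᵖΛᵏ(V)}, where DΦ and D(Φ⁻¹) denote the almost-everywhere Fréchet derivatives and ‖DΦ‖_{L∞(U)} the essential supremum of the operator norm ‖DΦ_x‖. -/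
open Set MeasureTheory Metric
open scoped ENNReal NNReal

noncomputable section

/- The pointwise norm of a `k`-form value: the ℓ² norm of its coefficients
on the increasing basis `k`-tuples. -/
open Classical in
def formNormF {n k : ℕ} (g : (Fin k → Euc n) → ℝ) : ℝ :=
  Real.sqrt (∑ σ ∈ Finset.univ.filter (fun σ : Fin k → Fin n => StrictMono σ),
    (g (fun i => EuclideanSpace.single (σ i) 1)) ^ 2)

/-- The `Lᵖ` norm of a `k`-form over a set `U` (`p = ∞` giving the essential
supremum). -/
def formLpNorm {n k : ℕ} (p : ℝ≥0∞)
    (ω : Euc n → (Euc n [⋀^Fin k]→ₗ[ℝ] ℝ)) (U : Set (Euc n)) : ℝ≥0∞ :=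
  eLpNorm (fun x => formNormF (⇑(ω x))) p (volume.restrict U)

/-- The pullback of a `k`-form along a map `Φ`, via the (a.e. defined) Fréchet
derivative of `Φ`. -/
def pullbackForm {n k : ℕ} (Φ : Euc n → Euc n)
    (ω : Euc n → (Euc n [⋀^Fin k]→ₗ[ℝ] ℝ)) : Euc n → (Euc n [⋀^Fin k]→ₗ[ℝ] ℝ) :=
  fun x => (ω (Φ x)).compLinearMap ((fderiv ℝ Φ x : Euc n →ₗ[ℝ] Euc n))

/-- The essential supremum over `U` of the operator norm of the derivative of `Φ`. -/
def derivLinfNorm {n : ℕ} (Φ : Euc n → Euc n) (U : Set (Euc n)) : ℝ≥0∞ :=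
  essSup (fun x => (‖fderiv ℝ Φ x‖₊ : ℝ≥0∞)) (volume.restrict U)

/-- The essential supremum over `U` of `|det DΦ|`. -/
def detLinfNorm {n : ℕ} (Φ : Euc n → Euc n) (U : Set (Euc n)) : ℝ≥0∞ :=
  essSup (fun x => (‖LinearMap.det ((fderiv ℝ Φ x : Euc n →ₗ[ℝ] Euc n))‖₊ : ℝ≥0∞))
    (volume.restrict U)

/-! Pointwise, `|(Φ*ω)(x)| ≤ ‖DΦ_x‖ᵏ |ω(Φ x)|`: the sum of the squared coefficients of a
`k`-form over all (not only increasing) index tuples is `k!` times its squared norm, and this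
Hilbert–Schmidt sum grows by at most `‖A‖²` each time one argument slot is composed with `A`.
By Rademacher's theorem the change of variables formula applies to the Lipschitz inverse `Φ⁻¹`
and gives `∫_U h ∘ Φ ≤ ‖det DΦ⁻¹‖_∞ ∫_V h`, whence the factor `‖det DΦ⁻¹‖_∞^{1/p}`; for `p = ∞`
the same inequality shows that `Φ` pulls null sets back to null sets. Finally `|det A| ≤ ‖A‖ⁿ`
because `A` maps the unit ball into the ball of radius `‖A‖`. -/

section FormNorm

open Finset
open scoped RealInnerProductSpace Nat

variable {n : ℕ}

local notation "𝐞" => fun m : Fin n => EuclideanSpace.single m (1 : ℝ)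

def coeffSqSum {k : ℕ} (g : (Fin k → Euc n) → ℝ) : ℝ :=
  ∑ σ : Fin k → Fin n, g (fun i => 𝐞 (σ i)) ^ 2

theorem sum_sq_apply_single_eq_norm_sq (L : Euc n →L[ℝ] ℝ) :
    ∑ m, L (𝐞 m) ^ 2 = ‖L‖ ^ 2 := by
  set u := (InnerProductSpace.toDual ℝ (Euc n)).symm L
  have hL : ∀ v, L v = ⟪u, v⟫ := fun v => by
    simp [u, InnerProductSpace.toDual_symm_apply]
  rw [← (InnerProductSpace.toDual ℝ (Euc n)).symm.norm_map, EuclideanSpace.real_norm_sq_eq]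
  simp only [hL, EuclideanSpace.inner_single_right, one_mul, conj_trivial]
  rfl

theorem sum_sq_apply_comp_single_le (L : Euc n →ₗ[ℝ] ℝ) (A : Euc n →L[ℝ] Euc n) :
    ∑ m, L (A (𝐞 m)) ^ 2 ≤ ‖A‖ ^ 2 * ∑ m, L (𝐞 m) ^ 2 := by
  set L' := LinearMap.toContinuousLinearMap L
  calc ∑ m, L (A (𝐞 m)) ^ 2 = ‖L'.comp A‖ ^ 2 := sum_sq_apply_single_eq_norm_sq (L'.comp A)
    _ ≤ (‖L'‖ * ‖A‖) ^ 2 := by gcongr; exact L'.opNorm_comp_le A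
    _ = ‖A‖ ^ 2 * ∑ m, L (𝐞 m) ^ 2 := by
      rw [mul_pow, mul_comm, ← sum_sq_apply_single_eq_norm_sq L']
      rfl

theorem coeffSqSum_compLinearMap_le (A : Euc n →L[ℝ] Euc n) :
    ∀ {k : ℕ} (g : MultilinearMap ℝ (fun _ : Fin k => Euc n) ℝ),
      coeffSqSum (g.compLinearMap fun _ => (A : Euc n →ₗ[ℝ] Euc n)) ≤ ‖A‖ ^ (2 * k) * coeffSqSum g
  | 0, g => by
    simp only [coeffSqSum, MultilinearMap.compLinearMap_apply, mul_zero, pow_zero, one_mul]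
    exact le_of_eq (congrArg _ (funext fun σ => by congr 2; exact Subsingleton.elim _ _))
  | k + 1, g => by
    have split (F : (Fin (k + 1) → Fin n) → ℝ) :
        ∑ σ, F σ = ∑ m, ∑ τ : Fin k → Fin n, F (Fin.cons m τ) := by
      rw [← (Fin.consEquiv fun _ => Fin n).sum_comp, Fintype.sum_prod_type]
      rfl
    have hcons {β : Type} (f : Fin n → β) (m : Fin n) (τ : Fin k → Fin n) :
        (fun i => f ((Fin.cons m τ : Fin (k + 1) → Fin n) i)) = Fin.cons (f m) fun i => f (τ i) :=
      Fin.comp_cons f m τ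
    set L : (Fin k → Fin n) → Euc n →ₗ[ℝ] ℝ := fun τ =>
      g.toLinearMap (Fin.cons 0 fun i => 𝐞 (τ i)) 0
    have hL (τ : Fin k → Fin n) (v : Euc n) : L τ v = g.curryLeft v fun i => 𝐞 (τ i) := by
      simp [L, MultilinearMap.toLinearMap_apply, Fin.update_cons_zero]
    calc coeffSqSum (g.compLinearMap fun _ => (A : Euc n →ₗ[ℝ] Euc n))
        = ∑ m, coeffSqSum
            ((g.curryLeft (A (𝐞 m))).compLinearMap fun _ => (A : Euc n →ₗ[ℝ] Euc n)) := by
          simp only [coeffSqSum, split, MultilinearMap.compLinearMap_apply,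
            MultilinearMap.curryLeft_apply,
            ContinuousLinearMap.coe_coe, hcons fun m => A (𝐞 m)]
      _ ≤ ∑ m, ‖A‖ ^ (2 * k) * coeffSqSum (g.curryLeft (A (𝐞 m))) :=
          Finset.sum_le_sum fun m _ => coeffSqSum_compLinearMap_le A _
      _ = ‖A‖ ^ (2 * k) * ∑ τ : Fin k → Fin n, ∑ m, L τ (A (𝐞 m)) ^ 2 := by
          simp only [coeffSqSum, hL, ← Finset.mul_sum]
          rw [Finset.sum_comm]
      _ ≤ ‖A‖ ^ (2 * k) * ∑ τ : Fin k → Fin n, ‖A‖ ^ 2 * ∑ m, L τ (𝐞 m) ^ 2 := by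
          gcongr with τ
          exact sum_sq_apply_comp_single_le (L τ) A
      _ = ‖A‖ ^ (2 * (k + 1)) * coeffSqSum g := by
          simp only [coeffSqSum, split, hL, MultilinearMap.curryLeft_apply, ← Finset.mul_sum,
            hcons 𝐞]
          rw [Finset.sum_comm, ← mul_assoc, ← pow_add, mul_add, mul_one, add_comm]

theorem coeffSqSum_eq_factorial_mul_formNormF_sq {k : ℕ} (f : Euc n [⋀^Fin k]→ₗ[ℝ] ℝ) :
    coeffSqSum f = k ! * formNormF f ^ 2 := by
  set F : (Fin k → Fin n) → ℝ := fun σ => f (fun i => 𝐞 (σ i)) ^ 2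
  have hperm (σ : Fin k → Fin n) (π : Equiv.Perm (Fin k)) : F (σ ∘ π) = F σ := by
    simp only [F, Function.comp_apply]
    rw [show (fun i => 𝐞 (σ (π i))) = (fun i => 𝐞 (σ i)) ∘ π from rfl, f.map_perm]
    rcases Int.units_eq_one_or (Equiv.Perm.sign π) with h | h <;> simp [h, Units.smul_def]
  have hinj : ∑ σ ∈ univ.filter Function.Injective, F σ = ∑ σ, F σ := by
    refine Finset.sum_filter_of_ne fun σ _ hσ => ?_
    by_contra hσinj
    obtain ⟨a, b, hab, hne⟩ := Function.not_injective_iff.1 hσinj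
    exact hσ (by simp [F, f.map_eq_zero_of_eq (fun i => 𝐞 (σ i)) (congrArg 𝐞 hab) hne])
  -- every injective tuple is uniquely an increasing one composed with a permutation
  have hsort : ∑ σ ∈ univ.filter Function.Injective, F σ
      = ∑ q ∈ univ.filter (StrictMono : (Fin k → Fin n) → Prop) ×ˢ
          (univ : Finset (Equiv.Perm (Fin k))),
          F q.1 := by
    refine Finset.sum_nbij' (fun σ => (σ ∘ Tuple.sort σ, (Tuple.sort σ)⁻¹)) (fun q => q.1 ∘ q.2)
      ?_ ?_ ?_ ?_ fun σ _ => (hperm σ _).symm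
    · simp only [mem_filter, mem_product, Finset.mem_univ, true_and, and_true]
      exact fun σ hσ =>
        (Tuple.monotone_sort σ).strictMono_of_injective (hσ.comp (Equiv.injective _))
    · simp only [mem_filter, mem_product, Finset.mem_univ, true_and, and_true]
      exact fun q hq => hq.injective.comp q.2.injective
    · intro σ _
      funext i
      simp
    · rintro ⟨τ, π⟩ h
      have hτ : StrictMono τ := by simpa using h
      have hsorted : (τ ∘ π) ∘ Tuple.sort (τ ∘ π) = τ := by
        rw [Tuple.comp_perm_comp_sort_eq_comp_sort, Tuple.sort_eq_refl_iff_monotone.2 hτ.monotone]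
        rfl
      have hπ : Tuple.sort (τ ∘ π) = π⁻¹ := by
        refine Equiv.ext fun i => ?_
        rw [Equiv.Perm.eq_inv_iff_eq]
        exact hτ.injective (congrFun hsorted i)
      rw [hπ] at hsorted ⊢
      exact Prod.ext hsorted (inv_inv π)
  rw [formNormF, Real.sq_sqrt (Finset.sum_nonneg fun _ _ => sq_nonneg _), coeffSqSum, ← hinj, hsort,
    Finset.sum_product, Finset.mul_sum]
  simp [F, Fintype.card_perm]

theorem formNormF_nonneg {k : ℕ} (g : (Fin k → Euc n) → ℝ) : 0 ≤ formNormF g :=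
  Real.sqrt_nonneg _

theorem formNormF_compLinearMap_le {k : ℕ} (f : Euc n [⋀^Fin k]→ₗ[ℝ] ℝ) (A : Euc n →L[ℝ] Euc n) :
    formNormF (f.compLinearMap (A : Euc n →ₗ[ℝ] Euc n)) ≤ ‖A‖ ^ k * formNormF f := by
  have hk : (0 : ℝ) < k ! := mod_cast k.factorial_pos
  refine (pow_le_pow_iff_left₀ (formNormF_nonneg _)
    (mul_nonneg (by positivity) (formNormF_nonneg f)) two_ne_zero).1 (le_of_mul_le_mul_left ?_ hk)
  calc (k ! : ℝ) * formNormF (f.compLinearMap (A : Euc n →ₗ[ℝ] Euc n)) ^ 2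
      = coeffSqSum (f.toMultilinearMap.compLinearMap fun _ => (A : Euc n →ₗ[ℝ] Euc n)) :=
        (coeffSqSum_eq_factorial_mul_formNormF_sq _).symm
    _ ≤ ‖A‖ ^ (2 * k) * coeffSqSum f := coeffSqSum_compLinearMap_le A _
    _ = k ! * (‖A‖ ^ k * formNormF f) ^ 2 := by
        rw [coeffSqSum_eq_factorial_mul_formNormF_sq]; ring

end FormNorm

theorem ContinuousLinearMap.abs_det_le_norm_pow {E : Type*} [NormedAddCommGroup E]
    [NormedSpace ℝ E] [FiniteDimensional ℝ E] (A : E →L[ℝ] E) :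
    |LinearMap.det (A : E →ₗ[ℝ] E)| ≤ ‖A‖ ^ Module.finrank ℝ E := by
  let := borel E
  have : BorelSpace E := ⟨rfl⟩
  set μ : Measure E := Measure.addHaar
  -- compare the volumes of `A (closedBall 0 1)` and of the ball of radius `‖A‖` containing it
  have himage : A '' closedBall 0 1 ⊆ closedBall 0 ‖A‖ := by
    rintro - ⟨x, hx, rfl⟩
    rw [mem_closedBall_zero_iff] at hx ⊢
    simpa using A.le_opNorm_of_le hx
  have hvol := measure_mono (μ := μ) himage
  rw [Measure.addHaar_image_continuousLinearMap, Measure.addHaar_closedBall' μ 0 (norm_nonneg A),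
    ENNReal.mul_le_mul_iff_left (measure_closedBall_pos μ 0 one_pos).ne'
      measure_closedBall_lt_top.ne] at hvol
  exact (ENNReal.ofReal_le_ofReal_iff (by positivity)).1 hvol

theorem LipschitzOnWith.addHaar_image_eq_zero {E : Type*} [NormedAddCommGroup E]
    [NormedSpace ℝ E] [FiniteDimensional ℝ E] [MeasurableSpace E] [BorelSpace E]
    (μ : Measure E) [μ.IsAddHaarMeasure] {K : ℝ≥0} {f : E → E} {s : Set E}
    (hf : LipschitzOnWith K f s) (hs : μ s = 0) : μ (f '' s) = 0 := by
  -- `μ` and the Hausdorff measure of dimension `finrank ℝ E` are mutually absolutely continuous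
  set d : ℝ := ((Module.finrank ℝ E : ℕ) : ℝ)
  have hs' : μH[d] s = 0 := Measure.absolutelyContinuous_isAddHaarMeasure _ μ hs
  have : μH[d] (f '' s) = 0 := by
    simpa [hs'] using hf.hausdorffMeasure_image_le (d := d) (Nat.cast_nonneg _)
  exact Measure.absolutelyContinuous_isAddHaarMeasure μ _ this

section LipschitzChangeOfVariables

variable {n : ℕ}

theorem derivLinfNorm_le {Φ : Euc n → Euc n} {U : Set (Euc n)} {K : ℝ≥0} (hU : IsOpen U)
    (hΦ : LipschitzOnWith K Φ U) : derivLinfNorm Φ U ≤ K := by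
  refine essSup_le_of_ae_le _ ?_
  filter_upwards [ae_restrict_mem hU.measurableSet] with x hx
  exact ENNReal.coe_le_coe.2 (norm_fderiv_le_of_lipschitzOn ℝ (hU.mem_nhds hx) hΦ)

theorem detLinfNorm_le_derivLinfNorm_pow (Φ : Euc n → Euc n) (U : Set (Euc n)) :
    detLinfNorm Φ U ≤ derivLinfNorm Φ U ^ n := by
  refine essSup_le_of_ae_le _ ?_
  filter_upwards [ENNReal.ae_le_essSup fun x => (‖fderiv ℝ Φ x‖₊ : ℝ≥0∞)] with x hx
  refine le_trans ?_ (pow_le_pow_left' hx n)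
  rw [← ENNReal.coe_pow, ENNReal.coe_le_coe, ← NNReal.coe_le_coe, coe_nnnorm, NNReal.coe_pow,
    coe_nnnorm, Real.norm_eq_abs]
  simpa using (fderiv ℝ Φ x).abs_det_le_norm_pow

theorem setLIntegral_image_le_detLinfNorm_mul {g : Euc n → Euc n} {V : Set (Euc n)} {K : ℝ≥0}
    (hV : IsOpen V) (hg : LipschitzOnWith K g V) (hinj : InjOn g V) (G : Euc n → ℝ≥0∞) :
    ∫⁻ x in g '' V, G x ≤ detLinfNorm g V * ∫⁻ y in V, G (g y) := by
  set D := detLinfNorm g V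
  have hD : D ≠ ⊤ := ne_top_of_le_ne_top (by finiteness)
    ((detLinfNorm_le_derivLinfNorm_pow g V).trans (pow_le_pow_left' (derivLinfNorm_le hV hg) n))
  -- Rademacher: `g` is differentiable on the conull part `V'` of `V`
  set V' := V ∩ {y | DifferentiableAt ℝ g y}
  have hV' : MeasurableSet V' := hV.measurableSet.inter (measurableSet_of_differentiableAt ℝ g)
  have hVV' : volume (V \ V') = 0 := by
    refine measure_mono_null ?_ (ae_iff.1 (hg.ae_differentiableWithinAt_of_mem (μ := volume)))
    exact fun y hy hdiff => hy.2 ⟨hy.1, (hdiff hy.1).differentiableAt (hV.mem_nhds hy.1)⟩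
  have himage : g '' V' =ᵐ[volume] g '' V := by
    refine ae_eq_set.2 ⟨by rw [sdiff_eq_empty.2 (image_mono inter_subset_left), measure_empty],
      measure_mono_null ?_ ((hg.mono sdiff_subset).addHaar_image_eq_zero volume hVV')⟩
    rintro - ⟨⟨y, hy, rfl⟩, hy'⟩
    exact ⟨y, ⟨hy, fun h => hy' ⟨y, h, rfl⟩⟩, rfl⟩
  calc ∫⁻ x in g '' V, G x = ∫⁻ x in g '' V', G x := setLIntegral_congr himage.symm
    _ = ∫⁻ y in V', ENNReal.ofReal |(fderiv ℝ g y).det| * G (g y) :=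
        lintegral_image_eq_lintegral_abs_det_fderiv_mul volume hV'
          (fun y hy => hy.2.hasFDerivAt.hasFDerivWithinAt) (hinj.mono inter_subset_left) G
    _ ≤ ∫⁻ y in V', D * G (g y) := by
        refine lintegral_mono_ae ?_
        filter_upwards [ae_restrict_of_ae_restrict_of_subset inter_subset_left
          (ENNReal.ae_le_essSup (μ := volume.restrict V) _)] with y hy
        rw [← Real.enorm_eq_ofReal_abs]
        exact mul_le_mul_left hy _
    _ = D * ∫⁻ y in V', G (g y) := lintegral_const_mul' _ _ hD
    _ ≤ D * ∫⁻ y in V, G (g y) := by gcongr; exact inter_subset_left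

theorem setLIntegral_comp_le_detLinfNorm_mul {Φ Φinv : Euc n → Euc n} {U V : Set (Euc n)}
    {K : ℝ≥0} (hV : IsOpen V) (hΦinv : LipschitzOnWith K Φinv V) (hright : RightInvOn Φinv Φ V)
    (hU : Φinv '' V = U) (H : Euc n → ℝ≥0∞) :
    ∫⁻ x in U, H (Φ x) ≤ detLinfNorm Φinv V * ∫⁻ y in V, H y := by
  subst hU
  refine (setLIntegral_image_le_detLinfNorm_mul hV hΦinv hright.injOn _).trans_eq ?_
  rw [setLIntegral_congr_fun hV.measurableSet fun y hy => congrArg H (hright hy)]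

end LipschitzChangeOfVariables

section PullbackOfMeasures

variable {α β F : Type*} [MeasurableSpace α] [MeasurableSpace β] [NormedAddCommGroup F]
  {μ : Measure α} {ν : Measure β} {f : α → β} {D : ℝ≥0∞}

theorem map_le_smul_of_forall_lintegral_comp_le (hf : AEMeasurable f μ)
    (hD : ∀ H : β → ℝ≥0∞, ∫⁻ x, H (f x) ∂μ ≤ D * ∫⁻ y, H y ∂ν) : μ.map f ≤ D • ν := by
  refine Measure.le_iff.2 fun s hs => ?_
  calc μ.map f s = ∫⁻ y, s.indicator 1 y ∂μ.map f := (lintegral_indicator_one hs).symm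
    _ = ∫⁻ x, s.indicator 1 (f x) ∂μ := lintegral_map' (aemeasurable_const.indicator hs) hf
    _ ≤ D * ∫⁻ y, s.indicator 1 y ∂ν := hD _
    _ = (D • ν) s := by rw [lintegral_indicator_one hs]; rfl

theorem eLpNorm_comp_le_of_forall_lintegral_comp_le (hf : AEMeasurable f μ)
    (hD : ∀ H : β → ℝ≥0∞, ∫⁻ x, H (f x) ∂μ ≤ D * ∫⁻ y, H y ∂ν) (g : β → F) (p : ℝ≥0∞) :
    eLpNorm (g ∘ f) p μ ≤ D ^ (1 / p).toReal * eLpNorm g p ν := by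
  rcases eq_or_ne p 0 with rfl | hp0
  · simp
  rcases eq_or_ne p ∞ with rfl | hptop
  · have hac : μ.map f ≪ ν :=
      Measure.absolutelyContinuous_of_le_smul (map_le_smul_of_forall_lintegral_comp_le hf hD)
    simp only [eLpNorm_exponent_top, ENNReal.div_top, ENNReal.toReal_zero, ENNReal.rpow_zero,
      one_mul]
    exact essSup_le_of_ae_le _ (ae_of_ae_map hf (hac.ae_le (ENNReal.ae_le_essSup _)))
  simp only [eLpNorm_eq_lintegral_rpow_enorm_toReal hp0 hptop, one_div, ENNReal.toReal_inv]
  rw [← ENNReal.mul_rpow_of_nonneg _ _ (by positivity)]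
  gcongr
  exact hD fun y => ‖g y‖ₑ ^ p.toReal

end PullbackOfMeasures

theorem formLpNorm_pullbackForm_le {n k : ℕ} (Φ : Euc n → Euc n)
    (ω : Euc n → (Euc n [⋀^Fin k]→ₗ[ℝ] ℝ)) (U : Set (Euc n)) (p : ℝ≥0∞)
    (hM : derivLinfNorm Φ U ≠ ⊤) :
    formLpNorm p (pullbackForm Φ ω) U
      ≤ derivLinfNorm Φ U ^ k * eLpNorm (fun x => formNormF (ω (Φ x))) p (volume.restrict U) := by
  set M := derivLinfNorm Φ U
  have hpt : ∀ᵐ x ∂volume.restrict U, ‖formNormF (pullbackForm Φ ω x)‖ₑ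
      ≤ (M.toNNReal ^ k : ℝ≥0) * ‖formNormF (ω (Φ x))‖ₑ := by
    filter_upwards [ENNReal.ae_le_essSup fun x => (‖fderiv ℝ Φ x‖₊ : ℝ≥0∞)] with x hx
    have hDΦ : ‖fderiv ℝ Φ x‖ ≤ M.toReal := ENNReal.le_toNNReal_of_coe_le hx hM
    rw [Real.enorm_eq_ofReal (formNormF_nonneg _), Real.enorm_eq_ofReal (formNormF_nonneg _),
      ← ENNReal.ofReal_coe_nnreal, ← ENNReal.ofReal_mul (by positivity)]
    refine ENNReal.ofReal_le_ofReal ((formNormF_compLinearMap_le _ _).trans ?_)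
    push_cast
    gcongr
    exact formNormF_nonneg _
  simpa [M, ENNReal.coe_toNNReal hM, formLpNorm] using eLpNorm_le_mul_eLpNorm_of_ae_le_mul' hpt p

theorem BiLipschitzOn.exists_lipschitzOnWith_image_of_leftInvOn {α β : Type*}
    [PseudoMetricSpace α] [PseudoMetricSpace β] {f : α → β} {g : β → α} {s : Set α}
    (hf : BiLipschitzOn f s) (hg : LeftInvOn g f s) : ∃ K, LipschitzOnWith K g (f '' s) := by
  obtain ⟨C, c, hc, h⟩ := hf
  refine ⟨c⁻¹.toNNReal, LipschitzOnWith.of_dist_le' ?_⟩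
  rintro - ⟨x, hx, rfl⟩ - ⟨y, hy, rfl⟩
  rw [hg hx, hg hy, inv_mul_eq_div, le_div_iff₀ hc, mul_comm]
  exact (h x hx y hy).1

theorem pullback_Lp_estimate_general {n k : ℕ} (U V : Set (Euc n))
    (hU : IsOpen U) (hV : IsOpen V) (Φ Φinv : Euc n → Euc n)
    (hbij : Set.BijOn Φ U V) (hlip : BiLipschitzOn Φ U)
    (hinv : ∀ x ∈ U, Φinv (Φ x) = x) (hinv' : ∀ y ∈ V, Φ (Φinv y) = y)
    (p : ℝ≥0∞)
    (ω : Euc n → (Euc n [⋀^Fin k]→ₗ[ℝ] ℝ)) (hω : formLpNorm p ω V < ⊤) :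
    formLpNorm p (pullbackForm Φ ω) U < ⊤ ∧
    formLpNorm p (pullbackForm Φ ω) U
      ≤ derivLinfNorm Φ U ^ k * detLinfNorm Φinv V ^ (((1 : ℝ≥0∞) / p).toReal) *
        formLpNorm p ω V ∧
    derivLinfNorm Φ U ^ k * detLinfNorm Φinv V ^ (((1 : ℝ≥0∞) / p).toReal) *
        formLpNorm p ω V
      ≤ derivLinfNorm Φ U ^ k * derivLinfNorm Φinv V ^ (((n : ℝ≥0∞) / p).toReal) *
        formLpNorm p ω V := by
  obtain ⟨K, hΦ⟩ := hlip.exists_lipschitzOnWith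
  obtain ⟨L, hΦinv⟩ := hlip.exists_lipschitzOnWith_image_of_leftInvOn hinv
  rw [hbij.image_eq] at hΦinv
  have hUV : Φinv '' V = U := hbij.image_eq ▸ LeftInvOn.image_image hinv
  have hM : derivLinfNorm Φ U ≠ ⊤ := ne_top_of_le_ne_top ENNReal.coe_ne_top (derivLinfNorm_le hU hΦ)
  have hE : derivLinfNorm Φinv V ≠ ⊤ :=
    ne_top_of_le_ne_top ENNReal.coe_ne_top (derivLinfNorm_le hV hΦinv)
  have hD : detLinfNorm Φinv V ≤ derivLinfNorm Φinv V ^ n := detLinfNorm_le_derivLinfNorm_pow Φinv V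
  have hcomp := eLpNorm_comp_le_of_forall_lintegral_comp_le
    (hΦ.continuousOn.aemeasurable hU.measurableSet)
    (setLIntegral_comp_le_detLinfNorm_mul hV hΦinv hinv' hUV) (fun y => formNormF (ω y)) p
  have hmain : formLpNorm p (pullbackForm Φ ω) U
      ≤ derivLinfNorm Φ U ^ k * detLinfNorm Φinv V ^ (1 / p).toReal * formLpNorm p ω V := by
    rw [mul_assoc]
    exact (formLpNorm_pullbackForm_le Φ ω U p hM).trans (mul_le_mul_right hcomp _)
  refine ⟨hmain.trans_lt ?_, hmain, ?_⟩
  · have hDfin := ne_top_of_le_ne_top (ENNReal.pow_ne_top hE) hD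
    finiteness
  · gcongr
    calc detLinfNorm Φinv V ^ (1 / p).toReal
        ≤ (derivLinfNorm Φinv V ^ n) ^ (1 / p).toReal := by gcongr
      _ = derivLinfNorm Φinv V ^ ((n : ℝ≥0∞) / p).toReal := by
        rw [← ENNReal.rpow_natCast, ← ENNReal.rpow_mul, ENNReal.toReal_div, ENNReal.toReal_div]
        simp [div_eq_mul_inv]

/-- Pullback estimate: for a bi-Lipschitz bijection `Φ : U → V`
between open subsets of `ℝⁿ` and `p ∈ [1,∞]` (with `n/∞ = 0`), the pullback maps
`LᵖΛᵏ(V)` to `LᵖΛᵏ(U)` with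
`‖Φ*ω‖_{Lᵖ(U)} ≤ ‖DΦ‖_∞ᵏ ‖det DΦ⁻¹‖_∞^{1/p} ‖ω‖_{Lᵖ(V)}
  ≤ ‖DΦ‖_∞ᵏ ‖DΦ⁻¹‖_∞^{n/p} ‖ω‖_{Lᵖ(V)}`. -/
theorem pullback_Lp_estimate {n k : ℕ} (U V : Set (Euc n))
    (hU : IsOpen U) (hV : IsOpen V) (Φ Φinv : Euc n → Euc n)
    (hbij : Set.BijOn Φ U V) (hlip : BiLipschitzOn Φ U)
    (hinv : ∀ x ∈ U, Φinv (Φ x) = x) (hinv' : ∀ y ∈ V, Φ (Φinv y) = y)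
    (p : ℝ≥0∞) (hp : 1 ≤ p)
    (ω : Euc n → (Euc n [⋀^Fin k]→ₗ[ℝ] ℝ)) (hω : formLpNorm p ω V < ⊤) :
    formLpNorm p (pullbackForm Φ ω) U < ⊤ ∧
    formLpNorm p (pullbackForm Φ ω) U
      ≤ derivLinfNorm Φ U ^ k * detLinfNorm Φinv V ^ (((1 : ℝ≥0∞) / p).toReal) *
        formLpNorm p ω V ∧
    derivLinfNorm Φ U ^ k * detLinfNorm Φinv V ^ (((1 : ℝ≥0∞) / p).toReal) *
        formLpNorm p ω V
      ≤ derivLinfNorm Φ U ^ k * derivLinfNorm Φinv V ^ (((n : ℝ≥0∞) / p).toReal) *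
        formLpNorm p ω V :=
  pullback_Lp_estimate_general U V hU hV Φ Φinv hbij hlip hinv hinv' p ω hω
end
end

section
/- Let Ω ⊆ ℝⁿ be a bounded weakly Lipschitz domain with a two-sided collar Ψ and collar reflection 𝒜 : C⁺Ω → C⁻Ω. Then there exists a constant L ≥ 1, depending only on Ψ, such that for every closed set A ⊆ cl Ω, every δ ≥ 0, and every x ∈ B_δ(A) ∩ C⁺Ω, one has 𝒜(x) ∈ B_{Lδ}(A). -/
open Set MeasureTheory Metric
open scoped ENNReal NNReal

noncomputable section

/-- The last coordinate index of `Fin n`, for `n ≠ 0`. -/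
def lastIdx (n : ℕ) [NeZero n] : Fin n :=
  ⟨n - 1, Nat.sub_lt (Nat.pos_of_ne_zero (NeZero.ne n)) Nat.one_pos⟩

/-- The cube `[-1,1]^n`. -/
def cube (n : ℕ) : Set (Euc n) := {y | ∀ i, y i ∈ Icc (-1 : ℝ) 1}

/-- The lower half cube `[-1,1]^{n-1} × [-1,0)`. -/
def cubeLower (n : ℕ) [NeZero n] : Set (Euc n) := {y ∈ cube n | y (lastIdx n) < 0}

/-- The middle slice `[-1,1]^{n-1} × {0}`. -/
def cubeMid (n : ℕ) [NeZero n] : Set (Euc n) := {y ∈ cube n | y (lastIdx n) = 0}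

/-- The upper half cube `[-1,1]^{n-1} × (0,1]`. -/
def cubeUpper (n : ℕ) [NeZero n] : Set (Euc n) := {y ∈ cube n | 0 < y (lastIdx n)}

/-- An open set `Ω ⊆ ℝⁿ` is a weakly Lipschitz domain: every boundary point has a
closed neighborhood that is mapped onto the cube `[-1,1]^n` by a bi-Lipschitz
chart flattening the boundary. -/
def WeaklyLipschitzDomain {n : ℕ} [NeZero n] (Ω : Set (Euc n)) : Prop :=
  IsOpen Ω ∧ ∀ x ∈ frontier Ω, ∃ U : Set (Euc n), ∃ φ : Euc n → Euc n,
    IsClosed U ∧ x ∈ interior U ∧ Set.BijOn φ U (cube n) ∧ BiLipschitzOn φ U ∧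
    φ x = 0 ∧
    φ '' (Ω ∩ U) = cubeLower n ∧
    φ '' (frontier Ω ∩ U) = cubeMid n ∧
    φ '' ((closure Ω)ᶜ ∩ U) = cubeUpper n

/-- A two-sided collar of `∂Ω`: a LIP embedding of `∂Ω × [-1,1]` fixing `∂Ω × {0}`,
sending `∂Ω × [-1,0)` into `Ω` and `∂Ω × (0,1]` into the complement of `cl Ω`. -/
def TwoSidedCollar {n : ℕ} (Ω : Set (Euc n)) (Ψ : Euc n × ℝ → Euc n) : Prop :=
  IsLIPEmbeddingOn Ψ (frontier Ω ×ˢ Icc (-1 : ℝ) 1) ∧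
  (∀ x ∈ frontier Ω, Ψ (x, 0) = x) ∧
  (∀ x ∈ frontier Ω, ∀ t ∈ Ico (-1 : ℝ) 0, Ψ (x, t) ∈ Ω) ∧
  (∀ x ∈ frontier Ω, ∀ t ∈ Ioc (0 : ℝ) 1, Ψ (x, t) ∈ (closure Ω)ᶜ)

/-- The collar `CΩ = Ψ(∂Ω × [-1,1])`. -/
def collarSet {n : ℕ} (Ω : Set (Euc n)) (Ψ : Euc n × ℝ → Euc n) : Set (Euc n) :=
  Ψ '' (frontier Ω ×ˢ Icc (-1 : ℝ) 1)

/-- The exterior collar part `C⁺Ω = CΩ ∩ (cl Ω)ᶜ`. -/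
def collarPlus {n : ℕ} (Ω : Set (Euc n)) (Ψ : Euc n × ℝ → Euc n) : Set (Euc n) :=
  collarSet Ω Ψ ∩ (closure Ω)ᶜ

/-- The interior collar part `C⁻Ω = CΩ ∩ Ω`. -/
def collarMinus {n : ℕ} (Ω : Set (Euc n)) (Ψ : Euc n × ℝ → Euc n) : Set (Euc n) :=
  collarSet Ω Ψ ∩ Ω

/-- The extended domain `Ω^e = cl Ω ∪ C⁺Ω`. -/
def extendedDomain {n : ℕ} (Ω : Set (Euc n)) (Ψ : Euc n × ℝ → Euc n) : Set (Euc n) :=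
  closure Ω ∪ collarPlus Ω Ψ

/-- `A` is the collar reflection associated with the collar `Ψ`:
`A(Ψ(x,t)) = Ψ(x,-t)` for boundary points `x` and `t ∈ (0,1]`. -/
def IsCollarReflection {n : ℕ} (Ω : Set (Euc n)) (Ψ : Euc n × ℝ → Euc n)
    (A : Euc n → Euc n) : Prop :=
  ∀ x ∈ frontier Ω, ∀ t ∈ Ioc (0 : ℝ) 1, A (Ψ (x, t)) = Ψ (x, -t)

lemma locLip_continuousOn {α β : Type*} [PseudoMetricSpace α] [PseudoMetricSpace β]
    {f : α → β} {s : Set α}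
    (hf : ∀ x ∈ s, ∃ t ∈ nhdsWithin x s, ∃ K : ℝ,
      ∀ a ∈ t ∩ s, ∀ b ∈ t ∩ s, dist (f a) (f b) ≤ K * dist a b) :
    ContinuousOn f s := by
  intro x hx
  obtain ⟨t, ht, K, hK⟩ := hf x hx
  obtain ⟨u, hu_open, hxu, hut⟩ := mem_nhdsWithin.mp ht
  have hlip : LipschitzOnWith (Real.toNNReal K) f (u ∩ s) := by
    apply LipschitzOnWith.of_dist_le_mul
    intro a ha b hb
    calc dist (f a) (f b) ≤ K * dist a b :=
          hK a ⟨hut ha, ha.2⟩ b ⟨hut hb, hb.2⟩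
      _ ≤ Real.toNNReal K * dist a b :=
          mul_le_mul_of_nonneg_right (Real.le_coe_toNNReal K) dist_nonneg
  have h1 : ContinuousWithinAt f (s ∩ u) x := by
    have := hlip.continuousOn x ⟨hxu, hx⟩
    exact this.mono (fun y hy => ⟨hy.2, hy.1⟩)
  exact (continuousWithinAt_inter (hu_open.mem_nhds hxu)).mp h1

lemma exists_lip_bound_of_compact {α β : Type*} [PseudoMetricSpace α] [PseudoMetricSpace β]
    {f : α → β} {s : Set α} (hs : IsCompact s)
    (hf : ∀ x ∈ s, ∃ t ∈ nhdsWithin x s, ∃ K : ℝ,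
      ∀ a ∈ t ∩ s, ∀ b ∈ t ∩ s, dist (f a) (f b) ≤ K * dist a b) :
    ∃ K : ℝ, 0 ≤ K ∧ ∀ a ∈ s, ∀ b ∈ s, dist (f a) (f b) ≤ K * dist a b := by
  rcases s.eq_empty_or_nonempty with rfl | hne
  · exact ⟨0, le_refl 0, fun a ha => absurd ha (notMem_empty a)⟩
  have key : ∀ x ∈ s, ∃ r K : ℝ, 0 < r ∧
      ∀ a ∈ ball x (2*r) ∩ s, ∀ b ∈ ball x (2*r) ∩ s, dist (f a) (f b) ≤ K * dist a b := by
    intro x hx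
    obtain ⟨t, ht, K, hK⟩ := hf x hx
    obtain ⟨u, hu_open, hxu, hut⟩ := mem_nhdsWithin.mp ht
    obtain ⟨ε, hε, hball⟩ := Metric.isOpen_iff.mp hu_open x hxu
    refine ⟨ε/2, K, by linarith, ?_⟩
    have h2 : (2:ℝ) * (ε/2) = ε := by ring
    rw [h2]
    intro a ha b hb
    exact hK a ⟨hut ⟨hball ha.1, ha.2⟩, ha.2⟩ b ⟨hut ⟨hball hb.1, hb.2⟩, hb.2⟩
  choose! r Kf hr hK using key
  obtain ⟨I, hIs, hIfin, hcover⟩ := hs.elim_finite_subcover_image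
    (fun x hx => isOpen_ball)
    (fun y hy => mem_iUnion₂.mpr ⟨y, hy, mem_ball_self (hr y hy)⟩)
  have hFne : hIfin.toFinset.Nonempty := by
    obtain ⟨y, hy⟩ := hne
    obtain ⟨x, hxI, -⟩ := mem_iUnion₂.mp (hcover hy)
    exact ⟨x, hIfin.mem_toFinset.mpr hxI⟩
  set F := hIfin.toFinset with hF
  set ε := F.inf' hFne r with hεdef
  set K0 := F.sup' hFne Kf with hK0def
  have hε : 0 < ε := by
    rw [hεdef, Finset.lt_inf'_iff]
    intro x hx
    exact hr x (hIs (hIfin.mem_toFinset.mp hx))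
  have hcont : ContinuousOn f s := locLip_continuousOn hf
  have himg : IsCompact (f '' s) := hs.image_of_continuousOn hcont
  set D := Metric.diam (f '' s) with hD
  have hD0 : 0 ≤ D := Metric.diam_nonneg
  have hbound : ∀ a ∈ s, ∀ b ∈ s, dist (f a) (f b) ≤ D := fun a ha b hb =>
    Metric.dist_le_diam_of_mem himg.isBounded (mem_image_of_mem f ha) (mem_image_of_mem f hb)
  refine ⟨max K0 (D/ε), le_trans (div_nonneg hD0 hε.le) (le_max_right _ _), ?_⟩
  intro a ha b hb
  rcases lt_or_ge (dist a b) ε with hlt | hge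
  · obtain ⟨x, hxI, hax⟩ := mem_iUnion₂.mp (hcover ha)
    have hxs : x ∈ s := hIs hxI
    have hεx : ε ≤ r x := Finset.inf'_le r (hIfin.mem_toFinset.mpr hxI)
    rw [mem_ball] at hax
    have hab : a ∈ ball x (2 * r x) := by
      rw [mem_ball]; linarith [hr x hxs]
    have hbb : b ∈ ball x (2 * r x) := by
      rw [mem_ball]
      calc dist b x ≤ dist b a + dist a x := dist_triangle _ _ _
        _ < ε + r x := by rw [dist_comm b a]; linarith
        _ ≤ 2 * r x := by linarith
    calc dist (f a) (f b) ≤ Kf x * dist a b := hK x hxs a ⟨hab, ha⟩ b ⟨hbb, hb⟩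
      _ ≤ K0 * dist a b := mul_le_mul_of_nonneg_right
          (Finset.le_sup' Kf (hIfin.mem_toFinset.mpr hxI)) dist_nonneg
      _ ≤ max K0 (D/ε) * dist a b :=
          mul_le_mul_of_nonneg_right (le_max_left _ _) dist_nonneg
  · calc dist (f a) (f b) ≤ D := hbound a ha b hb
      _ = (D/ε) * ε := by field_simp
      _ ≤ (D/ε) * dist a b := mul_le_mul_of_nonneg_left hge (div_nonneg hD0 hε.le)
      _ ≤ max K0 (D/ε) * dist a b :=
          mul_le_mul_of_nonneg_right (le_max_right _ _) dist_nonneg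


lemma nearest_frontier {n : ℕ} {Ω : Set (Euc n)} (hcl : IsCompact (closure Ω))
    (hΩne : (closure Ω).Nonempty) {x : Euc n} (hx : x ∉ closure Ω) :
    ∃ z ∈ frontier Ω, ∀ a ∈ closure Ω, dist x z ≤ dist x a := by
  obtain ⟨z, hz, hdz⟩ := hcl.exists_infDist_eq_dist hΩne x
  have hle : ∀ a ∈ closure Ω, dist x z ≤ dist x a := fun a ha =>
    hdz ▸ Metric.infDist_le_dist_of_mem ha
  refine ⟨z, ?_, hle⟩
  have hd0 : 0 < dist x z := by
    rcases eq_or_lt_of_le (dist_nonneg (x := x) (y := z)) with h | h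
    · exact absurd (dist_eq_zero.mp h.symm ▸ hz) hx
    · exact h
  apply frontier_closure_subset (s := Ω)
  rw [frontier, closure_closure]
  refine ⟨hz, fun hint => ?_⟩
  obtain ⟨ε, hε, hball⟩ := Metric.mem_nhds_iff.mp (mem_interior_iff_mem_nhds.mp hint)
  set d := dist x z with hdd
  set c := min (ε / (2 * d)) (1/2) with hc
  have hc0 : 0 < c := lt_min (div_pos hε (by linarith)) (by norm_num)
  have hc1 : c ≤ 1/2 := min_le_right _ _
  set z' := z + c • (x - z) with hz'
  have hz'z : dist z' z = c * d := by
    rw [hz', dist_eq_norm, add_sub_cancel_left, norm_smul, Real.norm_eq_abs,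
      abs_of_pos hc0, hdd, dist_eq_norm]
  have hz'ball : z' ∈ ball z ε := by
    rw [mem_ball, hz'z]
    have : c * d ≤ (ε / (2 * d)) * d :=
      mul_le_mul_of_nonneg_right (min_le_left _ _) hd0.le
    have h2 : (ε / (2 * d)) * d = ε / 2 := by field_simp
    linarith
  have hxz' : dist x z' = (1 - c) * d := by
    have h1 : x - z' = (1 - c) • (x - z) := by rw [hz']; module
    rw [dist_eq_norm, h1, norm_smul, Real.norm_eq_abs, abs_of_pos (by linarith),
      hdd, dist_eq_norm]
  have := hle z' (hball hz'ball)
  rw [hxz'] at this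
  nlinarith


/-- There is `L ≥ 1`, depending only on the collar `Ψ`, such that
for every closed `A ⊆ cl Ω`, every `δ ≥ 0` and every `x ∈ B_δ(A) ∩ C⁺Ω`, the
reflected point satisfies `𝒜(x) ∈ B_{Lδ}(A)`. -/
theorem collar_reflection_neighborhood {n : ℕ} [NeZero n] (Ω : Set (Euc n))
    (hΩ : WeaklyLipschitzDomain Ω) (hbd : Bornology.IsBounded Ω)
    (Ψ : Euc n × ℝ → Euc n) (hΨ : TwoSidedCollar Ω Ψ)
    (A : Euc n → Euc n) (hA : IsCollarReflection Ω Ψ A) :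
    ∃ L : ℝ, 1 ≤ L ∧
      ∀ As : Set (Euc n), IsClosed As → As ⊆ closure Ω →
      ∀ δ : ℝ, 0 ≤ δ →
      ∀ x ∈ Metric.cthickening δ As ∩ collarPlus Ω Ψ,
        A x ∈ Metric.cthickening (L * δ) As := by
  obtain ⟨⟨hinj, hΨlip, g, hg, hglip⟩, hfix, hin, hout⟩ := hΨ
  have hclcpt : IsCompact (closure Ω) := hbd.isCompact_closure
  have hfrcpt : IsCompact (frontier Ω) :=
    hclcpt.of_isClosed_subset isClosed_frontier frontier_subset_closure
  set S := frontier Ω ×ˢ Icc (-1:ℝ) 1 with hSdef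
  have hScpt : IsCompact S := hfrcpt.prod isCompact_Icc
  obtain ⟨K, hK0, hK⟩ := exists_lip_bound_of_compact hScpt hΨlip
  have himg : IsCompact (Ψ '' S) := hScpt.image_of_continuousOn (locLip_continuousOn hΨlip)
  obtain ⟨K', hK'0, hK'⟩ := exists_lip_bound_of_compact himg hglip
  refine ⟨2*K*K' + 1, by nlinarith, ?_⟩
  intro As hAcl hAsub δ hδ x hx
  simp only [collarPlus, collarSet, mem_inter_iff, mem_compl_iff] at hx
  obtain ⟨hxth, ⟨⟨p, t⟩, hpt, rfl⟩, hxout⟩ := hx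
  rcases As.eq_empty_or_nonempty with rfl | hAne
  · rw [Metric.cthickening_empty] at hxth; exact absurd hxth (notMem_empty _)
  have hp : p ∈ frontier Ω := hpt.1
  have ht : t ∈ Icc (-1:ℝ) 1 := hpt.2
  have htpos : 0 < t := by
    by_contra h
    push_neg at h
    rcases lt_or_eq_of_le h with hlt | heq
    · exact hxout (subset_closure (hin p hp t ⟨ht.1, hlt⟩))
    · refine hxout ?_
      rw [heq, hfix p hp]
      exact frontier_subset_closure hp
  -- get a point a ∈ As with dist x a ≤ δ
  have hAcpt : IsCompact As := hclcpt.of_isClosed_subset hAcl hAsub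
  obtain ⟨a, haA, hda⟩ := hAcpt.exists_infDist_eq_dist hAne (Ψ (p, t))
  have hdxa : dist (Ψ (p, t)) a ≤ δ := by
    rw [← hda]
    have h1 : EMetric.infEdist (Ψ (p, t)) As ≤ ENNReal.ofReal δ :=
      Metric.mem_cthickening_iff.mp hxth
    have h2 : Metric.infDist (Ψ (p, t)) As = (EMetric.infEdist (Ψ (p, t)) As).toReal := rfl
    rw [h2]
    calc (EMetric.infEdist (Ψ (p, t)) As).toReal
        ≤ (ENNReal.ofReal δ).toReal := ENNReal.toReal_mono ENNReal.ofReal_ne_top h1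
      _ = δ := ENNReal.toReal_ofReal hδ
  -- nearest frontier point z
  obtain ⟨z, hzfr, hznear⟩ := nearest_frontier hclcpt ⟨a, hAsub haA⟩ hxout
  have hdxz : dist (Ψ (p, t)) z ≤ δ := le_trans (hznear a (hAsub haA)) hdxa
  have hptS : (p, t) ∈ S := hpt
  have hz0S : (z, (0:ℝ)) ∈ S := ⟨hzfr, by norm_num⟩
  have hΨz : Ψ (z, 0) = z := hfix z hzfr
  have htK' : t ≤ K' * δ := by
    have h3 := hK' (Ψ (p, t)) (mem_image_of_mem Ψ hptS) (Ψ (z, 0)) (mem_image_of_mem Ψ hz0S)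
    rw [hg _ hptS, hg _ hz0S] at h3
    have h4 : t ≤ dist ((p, t)) ((z, (0:ℝ))) := by
      rw [Prod.dist_eq]
      refine le_trans ?_ (le_max_right _ _)
      rw [Real.dist_eq]
      simp [abs_of_pos htpos]
    have h5 : dist (Ψ (p, t)) (Ψ (z, 0)) ≤ δ := by rw [hΨz]; exact hdxz
    calc t ≤ K' * dist (Ψ (p, t)) (Ψ (z, 0)) := le_trans h4 h3
      _ ≤ K' * δ := mul_le_mul_of_nonneg_left h5 hK'0
  -- reflection
  have hrefl : A (Ψ (p, t)) = Ψ (p, -t) := hA p hp t ⟨htpos, ht.2⟩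
  have hmtS : (p, -t) ∈ S := ⟨hp, ⟨show -1 ≤ -t by linarith [ht.2], show -t ≤ 1 by linarith⟩⟩
  have hp0S : (p, (0:ℝ)) ∈ S := ⟨hp, by norm_num⟩
  have hdm : dist ((p, -t)) ((p, (0:ℝ))) = t := by
    rw [Prod.dist_eq]
    simp [Real.dist_eq, abs_of_pos htpos, htpos.le]
  have hd0 : dist ((p, (0:ℝ))) ((p, t)) = t := by
    rw [Prod.dist_eq]
    simp [Real.dist_eq, abs_of_pos htpos, htpos.le]
  have h6 : dist (Ψ (p, -t)) (Ψ (p, 0)) ≤ K * t := by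
    have := hK _ hmtS _ hp0S; rwa [hdm] at this
  have h7 : dist (Ψ (p, 0)) (Ψ (p, t)) ≤ K * t := by
    have := hK _ hp0S _ hptS; rwa [hd0] at this
  have hfinal : dist (A (Ψ (p, t))) a ≤ (2*K*K' + 1) * δ := by
    rw [hrefl]
    calc dist (Ψ (p, -t)) a
        ≤ dist (Ψ (p, -t)) (Ψ (p, 0)) + dist (Ψ (p, 0)) (Ψ (p, t)) + dist (Ψ (p, t)) a :=
          dist_triangle4 _ _ _ _
      _ ≤ K * t + K * t + δ := by linarith
      _ ≤ K * (K' * δ) + K * (K' * δ) + δ := by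
          have := mul_le_mul_of_nonneg_left htK' hK0; linarith
      _ = (2*K*K' + 1) * δ := by ring
  exact Metric.mem_cthickening_of_dist_le _ _ _ _ haA hfinal

end
end

section
/- For every dimension n ∈ ℕ and every C > 0 there exist constants c_M, C_M > 0, depending only on n and C, with the following property: for every non-degenerate n-simplex T ⊂ ℝⁿ satisfying (diam T)ⁿ ≤ C · |T| (where |T| is the n-dimensional volume), and every affine bijection A(x) = Mx + b mapping the reference simplex Δⁿ = conv{0, e₁, …, e_n} onto T, the invertible linear part M satisfies ‖M‖ ≤ c_M · diam T and ‖M⁻¹‖ ≤ C_M · (diam T)⁻¹, where ‖·‖ denotes the operator norm. -/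
/-! The columns `M eᵢ` of the linear part are differences of two vertices of `T`, so
`‖M‖ ≤ n · diam T`. For the inverse, `|det M| · |Δⁿ| = |T| ≥ (diam T)ⁿ / C`, while by Cramer's
rule `M⁻¹ = adj M / det M`, and every entry of `adj M` is a signed sum of products of `n - 1`
entries of `M`, hence `O((diam T)ⁿ⁻¹)`. Together,
`‖M⁻¹‖ = O((diam T)ⁿ⁻¹ / (diam T)ⁿ) = O((diam T)⁻¹)`. -/

open Set MeasureTheory Metric
open scoped ENNReal NNReal

noncomputable section

/-- The reference simplex `Δⁿ = conv{0, e₁, …, e_n}`. -/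
def refSimplex (n : ℕ) : Set (Euc n) :=
  convexHull ℝ (insert 0 (Set.range fun i : Fin n => (EuclideanSpace.single i 1 : Euc n)))

open scoped Nat

namespace EuclideanSpace

variable {ι : Type*} [Fintype ι] [DecidableEq ι]

theorem sum_smul_single (x : EuclideanSpace ℝ ι) : ∑ i, x i • single i (1 : ℝ) = x := by
  simpa using (basisFun ι ℝ).sum_repr x

theorem norm_le_card_mul {x : EuclideanSpace ℝ ι} {a : ℝ} (h : ∀ i, |x i| ≤ a) :
    ‖x‖ ≤ Fintype.card ι * a := by
  conv_lhs => rw [← sum_smul_single x]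
  calc ‖∑ i, x i • single i (1 : ℝ)‖ ≤ ∑ i, ‖x i • single i (1 : ℝ)‖ := norm_sum_le _ _
    _ ≤ ∑ _i : ι, a := Finset.sum_le_sum fun i _ => by
        rw [norm_smul, PiLp.norm_single, norm_one, mul_one]; exact h i
    _ = Fintype.card ι * a := by simp

theorem opNorm_le_card_mul {E : Type*} [SeminormedAddCommGroup E] [NormedSpace ℝ E]
    (f : EuclideanSpace ℝ ι →L[ℝ] E) {a : ℝ} (ha : 0 ≤ a)
    (h : ∀ i, ‖f (single i 1)‖ ≤ a) : ‖f‖ ≤ Fintype.card ι * a := by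
  refine f.opNorm_le_bound (by positivity) fun x => ?_
  conv_lhs => rw [← sum_smul_single x]
  calc ‖f (∑ i, x i • single i (1 : ℝ))‖ ≤ ∑ i, ‖x i‖ * ‖f (single i 1)‖ := by
        rw [map_sum]
        refine (norm_sum_le _ _).trans_eq ?_
        simp only [map_smul, norm_smul]
    _ ≤ ∑ _i : ι, ‖x‖ * a :=
        Finset.sum_le_sum fun i _ => mul_le_mul (x.norm_apply_le i) (h i) (norm_nonneg _)
          (norm_nonneg _)
    _ = Fintype.card ι * a * ‖x‖ := by
        rw [Finset.sum_const, Finset.card_univ, nsmul_eq_mul, mul_comm ‖x‖, mul_assoc]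

end EuclideanSpace

namespace Matrix

open scoped Matrix.Norms.L2Operator

variable {ι : Type*} [Fintype ι] [DecidableEq ι]

theorem abs_adjugate_apply_le (A : Matrix ι ι ℝ) {a : ℝ} (ha : 0 < a) (hA : ∀ i j, |A i j| ≤ a)
    (i j : ι) : |A.adjugate i j| ≤ (Fintype.card ι)! * a ^ (Fintype.card ι - 1) := by
  have hA' : A = a • (a⁻¹ • A) := by rw [smul_smul, mul_inv_cancel₀ ha.ne', one_smul]
  rw [hA', adjugate_smul, smul_apply, smul_eq_mul, abs_mul, abs_pow, abs_of_pos ha, mul_comm,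
    adjugate_apply]
  gcongr
  have hle : ∀ k l, |(a⁻¹ • A).updateRow j (Pi.single i 1) k l| ≤ 1 := by
    intro k l
    rcases eq_or_ne k j with rfl | hk
    · rw [updateRow_self, Pi.single_apply]; split_ifs <;> simp
    · rw [updateRow_ne hk, smul_apply, smul_eq_mul, abs_mul, abs_inv, abs_of_pos ha,
        inv_mul_le_one₀ ha]
      exact hA k l
  simpa using det_le (abv := AbsoluteValue.abs) hle

theorem abs_apply_le_l2_opNorm (A : Matrix ι ι ℝ) (i j : ι) : |A i j| ≤ ‖A‖ := by
  have h := (toEuclideanCLM (𝕜 := ℝ) A).le_opNorm (EuclideanSpace.single j 1)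
  rw [PiLp.norm_single, norm_one, mul_one] at h
  refine le_trans ?_ (PiLp.norm_apply_le _ i |>.trans h)
  simp

theorem l2_opNorm_le_card_sq_mul (A : Matrix ι ι ℝ) {a : ℝ} (ha : 0 ≤ a)
    (hA : ∀ i j, |A i j| ≤ a) : ‖A‖ ≤ Fintype.card ι ^ 2 * a := by
  rw [cstar_norm_def, sq, mul_assoc]
  refine EuclideanSpace.opNorm_le_card_mul _ (by positivity) fun j => ?_
  refine EuclideanSpace.norm_le_card_mul fun i => ?_
  simpa using hA i j

theorem l2_opNorm_inv_mul_abs_det_le (A : Matrix ι ι ℝ) {a : ℝ} (ha : 0 < a) (hA : ‖A‖ ≤ a) :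
    ‖A⁻¹‖ * |A.det| ≤ Fintype.card ι ^ 2 * (Fintype.card ι)! * a ^ (Fintype.card ι - 1) := by
  rcases eq_or_ne A.det 0 with hdet | hdet
  · rw [hdet, abs_zero, mul_zero]; positivity
  have hentry : ∀ i j, |A⁻¹ i j| ≤ (Fintype.card ι)! * a ^ (Fintype.card ι - 1) / |A.det| := by
    intro i j
    rw [inv_def, smul_apply, Ring.inverse_eq_inv', smul_eq_mul, abs_mul, abs_inv, inv_mul_eq_div]
    gcongr
    exact A.abs_adjugate_apply_le ha (fun k l => (A.abs_apply_le_l2_opNorm k l).trans hA) i j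
  set N := Fintype.card ι
  calc ‖A⁻¹‖ * |A.det| ≤ N ^ 2 * (N ! * a ^ (N - 1) / |A.det|) * |A.det| := by
        gcongr
        exact A⁻¹.l2_opNorm_le_card_sq_mul (by positivity) hentry
    _ = N ^ 2 * N ! * a ^ (N - 1) := by field_simp

end Matrix

theorem ContinuousLinearMap.norm_mul_abs_det_le_of_comp_eq_id {ι : Type*} [Fintype ι]
    [DecidableEq ι] {f g : EuclideanSpace ℝ ι →L[ℝ] EuclideanSpace ℝ ι}
    (hfg : f.comp g = ContinuousLinearMap.id ℝ _) {a : ℝ} (ha : 0 < a) (hf : ‖f‖ ≤ a) :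
    ‖g‖ * |LinearMap.det (f : EuclideanSpace ℝ ι →ₗ[ℝ] EuclideanSpace ℝ ι)| ≤
      Fintype.card ι ^ 2 * (Fintype.card ι)! * a ^ (Fintype.card ι - 1) := by
  set A := Matrix.toEuclideanCLM (𝕜 := ℝ).symm f
  have hfA : f = Matrix.toEuclideanCLM (n := ι) (𝕜 := ℝ) A :=
    (StarAlgEquiv.apply_symm_apply _ f).symm
  have hgA : g = Matrix.toEuclideanCLM (n := ι) (𝕜 := ℝ) A⁻¹ := by
    have hAB : A * (Matrix.toEuclideanCLM (n := ι) (𝕜 := ℝ)).symm g = 1 := by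
      rw [← map_mul, ← map_one (Matrix.toEuclideanCLM (n := ι) (𝕜 := ℝ)).symm]
      exact congrArg _ hfg
    rw [Matrix.inv_eq_right_inv hAB, StarAlgEquiv.apply_symm_apply]
  have hdet : LinearMap.det (f : EuclideanSpace ℝ ι →ₗ[ℝ] EuclideanSpace ℝ ι) = A.det := by
    rw [hfA, Matrix.coe_toEuclideanCLM_eq_toEuclideanLin,
      Matrix.toEuclideanLin_eq_toLin_orthonormal, LinearMap.det_toLin]
  rw [hgA, hdet, ← Matrix.cstar_norm_def]
  exact A.l2_opNorm_inv_mul_abs_det_le ha (by rwa [Matrix.cstar_norm_def, ← hfA])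

theorem ContinuousLinearMap.norm_le_of_comp_eq_id_of_pow_le_abs_det {ι : Type*} [Fintype ι]
    [DecidableEq ι] [Nonempty ι] {f g : EuclideanSpace ℝ ι →L[ℝ] EuclideanSpace ℝ ι}
    (hfg : f.comp g = ContinuousLinearMap.id ℝ _) {L c d : ℝ} (hL : 0 < L) (hd : 0 < d)
    (hf : ‖f‖ ≤ L * d)
    (hdet : d ^ Fintype.card ι ≤ c * |LinearMap.det (f : EuclideanSpace ℝ ι →ₗ[ℝ] _)|) :
    ‖g‖ ≤ Fintype.card ι ^ 2 * (Fintype.card ι)! * L ^ (Fintype.card ι - 1) * c / d := by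
  set N := Fintype.card ι
  set δ := |LinearMap.det (f : EuclideanSpace ℝ ι →ₗ[ℝ] _)|
  have hc : 0 < c := pos_of_mul_pos_left ((pow_pos hd N).trans_le hdet) (abs_nonneg _)
  have hN : N - 1 + 1 = N := Nat.sub_add_cancel Fintype.card_pos
  rw [le_div_iff₀ hd]
  refine le_of_mul_le_mul_right ?_ (pow_pos hd (N - 1))
  calc ‖g‖ * d * d ^ (N - 1) = ‖g‖ * d ^ N := by rw [mul_assoc, ← pow_succ', hN]
    _ ≤ ‖g‖ * (c * δ) := by gcongr
    _ = c * (‖g‖ * δ) := by ring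
    _ ≤ c * (N ^ 2 * N ! * (L * d) ^ (N - 1)) :=
        mul_le_mul_of_nonneg_left (norm_mul_abs_det_le_of_comp_eq_id hfg (by positivity) hf) hc.le
    _ = N ^ 2 * N ! * L ^ (N - 1) * c * d ^ (N - 1) := by rw [mul_pow]; ring

theorem MeasureTheory.Measure.addHaar_image_continuousLinearMap_add {E : Type*}
    [NormedAddCommGroup E] [NormedSpace ℝ E] [MeasurableSpace E] [BorelSpace E]
    [FiniteDimensional ℝ E] (μ : Measure E) [μ.IsAddHaarMeasure] (f : E →L[ℝ] E) (b : E)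
    (s : Set E) :
    μ ((fun x => f x + b) '' s) = ENNReal.ofReal |LinearMap.det (f : E →ₗ[ℝ] E)| * μ s := by
  rw [← image_image (· + b) f, image_add_right, measure_preimage_add_right,
    addHaar_image_continuousLinearMap]

theorem diam_convexHull_range_pos {ι E : Type*} [Nontrivial ι] [NormedAddCommGroup E]
    [NormedSpace ℝ E] {v : ι → E} (hv : AffineIndependent ℝ v)
    (hb : Bornology.IsBounded (range v)) : 0 < diam (convexHull ℝ (range v)) := by
  obtain ⟨i, j, hij⟩ := exists_pair_ne ι
  rw [convexHull_diam]
  exact (dist_pos.2 (hv.injective.ne hij)).trans_le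
    (dist_le_diam_of_mem hb (mem_range_self i) (mem_range_self j))

section RefSimplex

variable {n : ℕ}

theorem zero_mem_refSimplex : (0 : Euc n) ∈ refSimplex n :=
  subset_convexHull ℝ _ (mem_insert (0 : Euc n) _)

theorem single_mem_refSimplex (i : Fin n) : EuclideanSpace.single i 1 ∈ refSimplex n :=
  subset_convexHull ℝ _ (mem_insert_of_mem _ ⟨i, rfl⟩)

theorem isCompact_refSimplex : IsCompact (refSimplex n) :=
  ((finite_range _).insert 0).isCompact_convexHull (𝕜 := ℝ)

theorem interior_refSimplex_nonempty : (interior (refSimplex n)).Nonempty := by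
  rw [refSimplex, interior_convexHull_nonempty_iff_affineSpan_eq_top,
    ← AffineSubspace.coe_eq_univ_iff, affineSpan_insert_zero]
  have hbasis : ⇑(EuclideanSpace.basisFun (Fin n) ℝ) = fun i => EuclideanSpace.single i 1 :=
    funext (EuclideanSpace.basisFun_apply _ _)
  simpa [hbasis] using (EuclideanSpace.basisFun (Fin n) ℝ).toBasis.span_eq

theorem toReal_volume_refSimplex_pos : 0 < (volume (refSimplex n)).toReal :=
  ENNReal.toReal_pos (Measure.measure_pos_of_nonempty_interior _ interior_refSimplex_nonempty).ne'
    isCompact_refSimplex.measure_lt_top.ne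

theorem norm_apply_single_le_diam {M : Euc n →L[ℝ] Euc n} {b : Euc n} {T : Set (Euc n)}
    (hT : Bornology.IsBounded T) (hMT : (fun x => M x + b) '' refSimplex n ⊆ T) (i : Fin n) :
    ‖M (EuclideanSpace.single i 1)‖ ≤ diam T := by
  have h := dist_le_diam_of_mem hT (hMT (mem_image_of_mem _ (single_mem_refSimplex i)))
    (hMT (mem_image_of_mem _ zero_mem_refSimplex))
  rwa [dist_eq_norm, map_zero, zero_add, add_sub_cancel_right] at h

end RefSimplex

/-- For every `n` and `C > 0` there are `c_M, C_M > 0`,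
depending only on `n` and `C`, such that for every non-degenerate `n`-simplex `T`
with `(diam T)ⁿ ≤ C |T|` and every affine bijection `x ↦ Mx + b` from the
reference simplex `Δⁿ` onto `T` one has `‖M‖ ≤ c_M diam T` and
`‖M⁻¹‖ ≤ C_M (diam T)⁻¹`. -/
theorem reference_transformation_bounds (n : ℕ) (C : ℝ) (hC : 0 < C) :
    ∃ cM CM : ℝ, 0 < cM ∧ 0 < CM ∧
      ∀ v : Fin (n + 1) → Euc n, AffineIndependent ℝ v →
      ∀ T : Set (Euc n), T = convexHull ℝ (Set.range v) →
        Metric.diam T ^ n ≤ C * (volume T).toReal →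
        ∀ (M Minv : Euc n →L[ℝ] Euc n) (b : Euc n),
          M.comp Minv = ContinuousLinearMap.id ℝ (Euc n) →
          Minv.comp M = ContinuousLinearMap.id ℝ (Euc n) →
          (fun x => M x + b) '' refSimplex n = T →
          ‖M‖ ≤ cM * Metric.diam T ∧ ‖Minv‖ ≤ CM * (Metric.diam T)⁻¹ := by
  set κ := (volume (refSimplex n)).toReal
  have hκ : 0 < κ := toReal_volume_refSimplex_pos
  set K : ℝ := n ^ 2 * n ! * n ^ (n - 1) * (C * κ)
  refine ⟨n + 1, K + 1, by positivity, by positivity, ?_⟩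
  rintro v hv T rfl hvol M Minv b hMMinv - himg
  set d := diam (convexHull ℝ (range v))
  have hbdd : Bornology.IsBounded (range v) := (finite_range v).isBounded
  have hM : ‖M‖ ≤ n * d := by
    simpa only [Fintype.card_fin] using EuclideanSpace.opNorm_le_card_mul M diam_nonneg
      (norm_apply_single_le_diam (isBounded_convexHull.2 hbdd) himg.subset)
  refine ⟨hM.trans (by gcongr; linarith), ?_⟩
  rcases Nat.eq_zero_or_pos n with rfl | hn
  · rw [Minv.opNorm_subsingleton]
    exact mul_nonneg (by positivity) (inv_nonneg.2 diam_nonneg)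
  have : Nontrivial (Fin (n + 1)) := Fin.nontrivial_iff_two_le.2 (by omega)
  have : Nonempty (Fin n) := ⟨⟨0, hn⟩⟩
  have hd : 0 < d := diam_convexHull_range_pos hv hbdd
  have hdet : d ^ n ≤ C * κ * |LinearMap.det (M : Euc n →ₗ[ℝ] Euc n)| := by
    rw [← himg, Measure.addHaar_image_continuousLinearMap_add, ENNReal.toReal_mul,
      ENNReal.toReal_ofReal (abs_nonneg _)] at hvol
    linarith
  calc ‖Minv‖ ≤ K / d := by
        simpa only [Fintype.card_fin] using
          ContinuousLinearMap.norm_le_of_comp_eq_id_of_pow_le_abs_det hMMinv (by positivity) hd hM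
            (by rwa [Fintype.card_fin])
    _ ≤ (K + 1) * d⁻¹ := by rw [div_eq_mul_inv]; gcongr; linarith

end
end

section
/- Let Ω ⊆ ℝⁿ be a bounded weakly Lipschitz domain with a two-sided collar Ψ, collar reflection 𝒜 : C⁺Ω → C⁻Ω, and extended domain Ω^e. Then for every Lipschitz function f : cl Ω → ℝ, the extension E⁰f : Ω^e → ℝ defined by E⁰f = f on cl Ω and E⁰f = f ∘ 𝒜 on C⁺Ω is Lipschitz with Lip(E⁰f, Ω^e) ≤ (1 + Lip(𝒜, C⁺Ω)) · Lip(f, cl Ω). -/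
open Set MeasureTheory Metric
open scoped ENNReal NNReal

noncomputable section

/- The extension of a function on `cl Ω` to the extended domain: `f` on `cl Ω`
and `f ∘ 𝒜` on `C⁺Ω`. -/
open Classical in
def extendFun {n : ℕ} (Ω : Set (Euc n)) (A : Euc n → Euc n) (f : Euc n → ℝ) :
    Euc n → ℝ :=
  fun x => if x ∈ closure Ω then f x else f (A x)

/-- A point of `C⁺Ω` is `Ψ (p, t)` with `p ∈ ∂Ω` and `t ∈ (0,1]`. -/
lemma collarPlus_rep {n : ℕ} (Ω : Set (Euc n)) (Ψ : Euc n × ℝ → Euc n)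
    (hΨ : TwoSidedCollar Ω Ψ) {y : Euc n} (hy : y ∈ collarPlus Ω Ψ) :
    ∃ p ∈ frontier Ω, ∃ t ∈ Ioc (0 : ℝ) 1, y = Ψ (p, t) := by
  obtain ⟨⟨q, hq, rfl⟩, hyc⟩ := hy
  obtain ⟨hq1, hq2⟩ := hq
  refine ⟨q.1, hq1, q.2, ?_, by simp⟩
  rcases lt_trichotomy q.2 0 with h | h | h
  · exact absurd (subset_closure (hΨ.2.2.1 q.1 hq1 q.2 ⟨hq2.1, h⟩)) hyc
  · exfalso
    have hq0 : q = (q.1, (0 : ℝ)) := by rw [← h]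
    have hq1' : Ψ q = q.1 := by rw [hq0]; exact hΨ.2.1 q.1 hq1
    exact hyc (by rw [hq1']; exact frontier_subset_closure hq1)
  · exact ⟨h, hq2.2⟩

/-- The reflected point of a point of `C⁺Ω` lies in `Ω`. -/
lemma reflect_mem {n : ℕ} (Ω : Set (Euc n)) (Ψ : Euc n × ℝ → Euc n)
    (hΨ : TwoSidedCollar Ω Ψ) (A : Euc n → Euc n) (hA : IsCollarReflection Ω Ψ A)
    {y : Euc n} (hy : y ∈ collarPlus Ω Ψ) : A y ∈ Ω := by
  obtain ⟨p, hp, t, ht, rfl⟩ := collarPlus_rep Ω Ψ hΨ hy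
  rw [hA p hp t ht]
  exact hΨ.2.2.1 p hp (-t) ⟨by linarith [ht.2], by linarith [ht.1]⟩

/-- Near the frontier, `A` is `LA`-Lipschitz "up to the boundary":
`‖A y - z‖ ≤ LA * ‖y - z‖` for `y ∈ C⁺Ω`, `z ∈ ∂Ω`. -/
lemma reflect_near_frontier {n : ℕ} (Ω : Set (Euc n)) (Ψ : Euc n × ℝ → Euc n)
    (hΨ : TwoSidedCollar Ω Ψ) (A : Euc n → Euc n) (hA : IsCollarReflection Ω Ψ A)
    (LA : ℝ) (hLA : 0 ≤ LA)
    (hAlip : ∀ x ∈ collarPlus Ω Ψ, ∀ y ∈ collarPlus Ω Ψ, ‖A x - A y‖ ≤ LA * ‖x - y‖)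
    {y : Euc n} (hy : y ∈ collarPlus Ω Ψ) {z : Euc n} (hz : z ∈ frontier Ω) :
    ‖A y - z‖ ≤ LA * ‖y - z‖ := by
  obtain ⟨hInj, hLoc, -⟩ := hΨ.1
  have hz0 : ((z, (0:ℝ))) ∈ frontier Ω ×ˢ Icc (-1 : ℝ) 1 := ⟨hz, by norm_num⟩
  obtain ⟨t, ht, K, hK⟩ := hLoc (z, 0) hz0
  rw [mem_nhdsWithin] at ht
  obtain ⟨u, hu_open, hu_mem, hu_sub⟩ := ht
  obtain ⟨r, hr, hball⟩ := Metric.isOpen_iff.1 hu_open _ hu_mem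
  set K' : ℝ := |K| + 1 with hK'
  have hK'pos : 0 < K' := by positivity
  have hKK' : K ≤ K' := by
    have := le_abs_self K; linarith
  refine le_of_forall_pos_le_add fun ε hε => ?_
  set s : ℝ := min (min (r / 2) 1) (ε / ((LA + 1) * K')) with hs_def
  have hspos : 0 < s := by
    apply lt_min (lt_min (by linarith) one_pos)
    positivity
  have hs1 : s ≤ 1 := le_trans (min_le_left _ _) (min_le_right _ _)
  have hsr : s < r := lt_of_le_of_lt (le_trans (min_le_left _ _) (min_le_left _ _)) (by linarith)
  have hsε : (LA + 1) * K' * s ≤ ε := by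
    have h1 : s ≤ ε / ((LA + 1) * K') := min_le_right _ _
    have h2 : 0 < (LA + 1) * K' := by positivity
    calc (LA + 1) * K' * s ≤ (LA + 1) * K' * (ε / ((LA + 1) * K')) := by
          exact mul_le_mul_of_nonneg_left h1 (le_of_lt h2)
      _ = ε := by field_simp
  -- the three relevant parameter points
  have hdmem : ∀ a : ℝ, |a| ≤ 1 → |a| < r → ((z, a)) ∈ t ∩ (frontier Ω ×ˢ Icc (-1:ℝ) 1) := by
    intro a ha har
    have hD : ((z, a)) ∈ frontier Ω ×ˢ Icc (-1:ℝ) 1 :=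
      ⟨hz, ⟨neg_le_of_abs_le ha, le_of_abs_le ha⟩⟩
    refine ⟨hu_sub ⟨hball ?_, hD⟩, hD⟩
    rw [Metric.mem_ball, Prod.dist_eq]
    simp [Real.dist_eq, har, hr]
  have hms : ((z, s)) ∈ t ∩ (frontier Ω ×ˢ Icc (-1:ℝ) 1) :=
    hdmem s (by rw [abs_of_pos hspos]; exact hs1) (by rw [abs_of_pos hspos]; exact hsr)
  have hmns : ((z, -s)) ∈ t ∩ (frontier Ω ×ˢ Icc (-1:ℝ) 1) :=
    hdmem (-s) (by rw [abs_neg, abs_of_pos hspos]; exact hs1)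
      (by rw [abs_neg, abs_of_pos hspos]; exact hsr)
  have hm0 : ((z, (0:ℝ))) ∈ t ∩ (frontier Ω ×ˢ Icc (-1:ℝ) 1) :=
    hdmem 0 (by norm_num) (by simpa using hr)
  -- distances along the collar
  have hdist : ∀ a : ℝ, dist ((z, a) : Euc n × ℝ) (z, 0) = |a| := by
    intro a
    rw [Prod.dist_eq]
    simp [Real.dist_eq]
  have d1 : dist (Ψ (z, -s)) (Ψ (z, 0)) ≤ K' * s := by
    calc dist (Ψ (z, -s)) (Ψ (z, 0)) ≤ K * dist ((z, -s) : Euc n × ℝ) (z, 0) :=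
          hK _ hmns _ hm0
      _ = K * s := by rw [hdist]; rw [abs_neg, abs_of_pos hspos]
      _ ≤ K' * s := mul_le_mul_of_nonneg_right hKK' (le_of_lt hspos)
  have d2 : dist (Ψ (z, s)) (Ψ (z, 0)) ≤ K' * s := by
    calc dist (Ψ (z, s)) (Ψ (z, 0)) ≤ K * dist ((z, s) : Euc n × ℝ) (z, 0) :=
          hK _ hms _ hm0
      _ = K * s := by rw [hdist]; rw [abs_of_pos hspos]
      _ ≤ K' * s := mul_le_mul_of_nonneg_right hKK' (le_of_lt hspos)
  have hΨz0 : Ψ (z, 0) = z := hΨ.2.1 z hz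
  -- the auxiliary collar point
  set w : Euc n := Ψ (z, s) with hw_def
  have hwplus : w ∈ collarPlus Ω Ψ := by
    refine ⟨⟨(z, s), ⟨hz, ⟨by linarith, hs1⟩⟩, rfl⟩, hΨ.2.2.2 z hz s ⟨hspos, hs1⟩⟩
  have hAw : A w = Ψ (z, -s) := hA z hz s ⟨hspos, hs1⟩
  have e1 : ‖A y - A w‖ ≤ LA * ‖y - w‖ := hAlip y hy w hwplus
  have e2 : ‖y - w‖ ≤ ‖y - z‖ + ‖z - w‖ := norm_sub_le_norm_sub_add_norm_sub _ _ _
  have e3 : ‖z - w‖ ≤ K' * s := by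
    have : ‖z - w‖ = dist (Ψ (z, s)) (Ψ (z, 0)) := by
      rw [dist_eq_norm, hΨz0, norm_sub_rev]
    rw [this]; exact d2
  have e4 : ‖A w - z‖ ≤ K' * s := by
    have : ‖A w - z‖ = dist (Ψ (z, -s)) (Ψ (z, 0)) := by
      rw [dist_eq_norm, hΨz0, hAw]
    rw [this]; exact d1
  calc ‖A y - z‖ ≤ ‖A y - A w‖ + ‖A w - z‖ := norm_sub_le_norm_sub_add_norm_sub _ _ _
    _ ≤ LA * (‖y - z‖ + K' * s) + K' * s := by
        have : ‖A y - A w‖ ≤ LA * (‖y - z‖ + K' * s) :=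
          le_trans e1 (mul_le_mul_of_nonneg_left (le_trans e2 (by linarith)) hLA)
        linarith
    _ = LA * ‖y - z‖ + (LA + 1) * K' * s := by ring
    _ ≤ LA * ‖y - z‖ + ε := by linarith

/-- The segment between a point of `cl Ω` and a point outside `cl Ω` meets `∂Ω`. -/
lemma segment_meets_frontier {n : ℕ} (Ω : Set (Euc n)) {x y : Euc n}
    (hx : x ∈ closure Ω) (hy : y ∉ closure Ω) :
    ∃ z ∈ segment ℝ x y, z ∈ frontier Ω := by
  by_contra h
  push_neg at h
  have h' : ∀ z ∈ segment ℝ x y, z ∉ frontier (closure Ω) := fun z hz hzf =>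
    h z hz (frontier_closure_subset hzf)
  have hpc : IsPreconnected (segment ℝ x y) := (convex_segment x y).isPreconnected
  have hu : IsOpen (interior (closure Ω)) := isOpen_interior
  have hv : IsOpen (closure Ω)ᶜ := isOpen_compl_iff.2 isClosed_closure
  have hsub : segment ℝ x y ⊆ interior (closure Ω) ∪ (closure Ω)ᶜ := by
    intro z hzs
    by_cases hzc : z ∈ closure Ω
    · left
      by_contra h1
      exact h' z hzs ⟨by rwa [closure_closure], h1⟩
    · exact Or.inr hzc
  have hxs : x ∈ segment ℝ x y := left_mem_segment ℝ x y
  have hys : y ∈ segment ℝ x y := right_mem_segment ℝ x y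
  have hxu : x ∈ interior (closure Ω) := by
    rcases hsub hxs with h1 | h1
    · exact h1
    · exact absurd hx h1
  obtain ⟨z, hz1, hz2, hz3⟩ := hpc _ _ hu hv hsub ⟨x, hxs, hxu⟩ ⟨y, hys, hy⟩
  exact hz3 (interior_subset hz2)

/-- For every Lipschitz function `f : cl Ω → ℝ`, the extension
`E⁰f` (equal to `f` on `cl Ω` and to `f ∘ 𝒜` on `C⁺Ω`) is Lipschitz on `Ω^e` with
`Lip(E⁰f, Ω^e) ≤ (1 + Lip(𝒜, C⁺Ω)) · Lip(f, cl Ω)`. -/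
theorem extension_lipschitz {n : ℕ} [NeZero n] (Ω : Set (Euc n))
    (hΩ : WeaklyLipschitzDomain Ω) (hbd : Bornology.IsBounded Ω)
    (Ψ : Euc n × ℝ → Euc n) (hΨ : TwoSidedCollar Ω Ψ)
    (A : Euc n → Euc n) (hA : IsCollarReflection Ω Ψ A)
    (LA : ℝ) (hLA : 0 ≤ LA)
    (hAlip : ∀ x ∈ collarPlus Ω Ψ, ∀ y ∈ collarPlus Ω Ψ, ‖A x - A y‖ ≤ LA * ‖x - y‖)
    (f : Euc n → ℝ) (Lf : ℝ) (hLf : 0 ≤ Lf)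
    (hflip : ∀ x ∈ closure Ω, ∀ y ∈ closure Ω, |f x - f y| ≤ Lf * ‖x - y‖) :
    ∀ x ∈ extendedDomain Ω Ψ, ∀ y ∈ extendedDomain Ω Ψ,
      |extendFun Ω A f x - extendFun Ω A f y| ≤ (1 + LA) * Lf * ‖x - y‖ := by
  have hE_cl : ∀ w ∈ closure Ω, extendFun Ω A f w = f w := by
    intro w hw; simp [extendFun, hw]
  have hE_plus : ∀ w ∈ collarPlus Ω Ψ, extendFun Ω A f w = f (A w) := by
    intro w hw
    have : w ∉ closure Ω := hw.2
    simp [extendFun, this]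
  have key : ∀ a ∈ closure Ω, ∀ b ∈ collarPlus Ω Ψ,
      |f a - f (A b)| ≤ (1 + LA) * Lf * ‖a - b‖ := by
    intro a ha b hb
    obtain ⟨z, hzseg, hzf⟩ := segment_meets_frontier Ω ha hb.2
    have hdd : dist a z + dist z b = dist a b := dist_add_dist_of_mem_segment hzseg
    have hzcl : z ∈ closure Ω := frontier_subset_closure hzf
    have hAb : A b ∈ closure Ω := subset_closure (reflect_mem Ω Ψ hΨ A hA hb)
    have h1 : |f a - f z| ≤ Lf * ‖a - z‖ := hflip a ha z hzcl
    have h2 : |f z - f (A b)| ≤ Lf * ‖z - A b‖ := hflip z hzcl _ hAb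
    have h3 : ‖z - A b‖ ≤ LA * dist z b := by
      rw [norm_sub_rev]
      calc ‖A b - z‖ ≤ LA * ‖b - z‖ :=
            reflect_near_frontier Ω Ψ hΨ A hA LA hLA hAlip hb hzf
        _ = LA * dist z b := by rw [← dist_eq_norm, dist_comm]
    have habs : |f a - f (A b)| ≤ |f a - f z| + |f z - f (A b)| := abs_sub_le _ _ _
    have hd1 : dist a z ≤ dist a b := by linarith [dist_nonneg (x := z) (y := b)]
    have hd2 : dist z b ≤ dist a b := by linarith [dist_nonneg (x := a) (y := z)]
    have hnaz : ‖a - z‖ = dist a z := (dist_eq_norm a z).symm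
    have hnab : ‖a - b‖ = dist a b := (dist_eq_norm a b).symm
    have hdnn : 0 ≤ dist a b := dist_nonneg
    calc |f a - f (A b)| ≤ Lf * ‖a - z‖ + Lf * ‖z - A b‖ := by linarith
      _ ≤ Lf * dist a b + Lf * (LA * dist a b) := by
          have e1 : Lf * ‖a - z‖ ≤ Lf * dist a b := by
            rw [hnaz]; exact mul_le_mul_of_nonneg_left hd1 hLf
          have e2 : Lf * ‖z - A b‖ ≤ Lf * (LA * dist a b) := by
            refine mul_le_mul_of_nonneg_left (le_trans h3 ?_) hLf
            exact mul_le_mul_of_nonneg_left hd2 hLA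
          linarith
      _ = (1 + LA) * Lf * ‖a - b‖ := by rw [hnab]; ring
  intro x hx y hy
  rcases hx with hx | hx <;> rcases hy with hy | hy
  · rw [hE_cl x hx, hE_cl y hy]
    have := hflip x hx y hy
    nlinarith [mul_nonneg (mul_nonneg hLA hLf) (norm_nonneg (x - y))]
  · rw [hE_cl x hx, hE_plus y hy]
    exact key x hx y hy
  · rw [hE_plus x hx, hE_cl y hy]
    calc |f (A x) - f y| = |f y - f (A x)| := abs_sub_comm _ _
      _ ≤ (1 + LA) * Lf * ‖y - x‖ := key y hy x hx
      _ = (1 + LA) * Lf * ‖x - y‖ := by rw [norm_sub_rev]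
  · rw [hE_plus x hx, hE_plus y hy]
    have hAx : A x ∈ closure Ω := subset_closure (reflect_mem Ω Ψ hΨ A hA hx)
    have hAy : A y ∈ closure Ω := subset_closure (reflect_mem Ω Ψ hΨ A hA hy)
    have h1 := hflip (A x) hAx (A y) hAy
    have h2 := hAlip x hx y hy
    have h3 : Lf * ‖A x - A y‖ ≤ Lf * (LA * ‖x - y‖) :=
      mul_le_mul_of_nonneg_left h2 hLf
    nlinarith [mul_nonneg hLf (norm_nonneg (x - y))]

end
end
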